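/- arXiv:1301.1365 — 2 statements merged into one kernel-verified Lean document; each statement's English description precedes it below -/
import Mathlib

section
/- Let S(t) be the unique formal power series over ℝ with zero constant term satisfying S = t(1+2S)(1+S), let R(t) = S(t) + t(1+S(t)), let D(t) = S(t) + S(t)²/(1 − R(t)) (the generating function of directed animals on 𝒩 by area), and let ρ = 3 − √8. For every real t with 0 < t < ρ, the power series D converges at t and D(t) = (1/4)·((1 + t)/√(1 − 6t + t²) − 1). -/
/-!
All the series involved have nonnegative coefficients, so for `t > 0` convergence is just
boundedness of partial sums, and evaluation at `t` turns products of power series into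
products of sums (Cauchy products of nonnegative series).

Since `S = X (1 + 2S)(1 + S)`, the partial sums satisfy `s_{N+1} ≤ t (1 + 2 s_N)(1 + s_N)`, so
they stay below the smaller root `σ` of `x = t (1 + 2x)(1 + x)`; their limit is a root not
exceeding `σ`, hence is `σ = (1 - 3t - √(1 - 6t + t²)) / (4t)`. Next `E = (1 - R)⁻¹` solves
`E = 1 + R E`, whose partial sums are bounded by `1 / (1 - R(t))` as soon as `R(t) < 1`; so
`D(t) = σ + σ² / (1 - R(t))`, which simplifies to the closed form.
-/

open PowerSeries Finset

lemma Finset.sum_range_sum_antidiagonal_le_mul {R : Type*} [CommSemiring R] [PartialOrder R]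
    [IsOrderedRing R] {f g : ℕ → R} (hf : ∀ n, 0 ≤ f n) (hg : ∀ n, 0 ≤ g n) (N : ℕ) :
    ∑ n ∈ range N, ∑ p ∈ antidiagonal n, f p.1 * g p.2
      ≤ (∑ i ∈ range N, f i) * ∑ j ∈ range N, g j := by
  rw [sum_mul_sum, ← sum_product', ← sum_biUnion]
  · refine sum_le_sum_of_subset_of_nonneg (fun p hp => ?_) fun p _ _ => mul_nonneg (hf _) (hg _)
    obtain ⟨n, hn, hp⟩ := mem_biUnion.mp hp
    simp only [mem_range, HasAntidiagonal.mem_antidiagonal, mem_product] at hn hp ⊢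
    omega
  · intro m _ n _ hmn
    exact disjoint_left.mpr fun p hpm hpn =>
      hmn ((mem_antidiagonal.mp hpm).symm.trans (mem_antidiagonal.mp hpn))

namespace PowerSeries

section NonnegCoeff

variable {R : Type*} [CommSemiring R] [PartialOrder R] [IsOrderedRing R]

variable (R) in
def nonnegCoeff : Subsemiring R⟦X⟧ where
  carrier := {f | ∀ n, 0 ≤ coeff n f}
  mul_mem' hf hg n := by
    rw [coeff_mul]
    exact sum_nonneg fun p _ => mul_nonneg (hf _) (hg _)
  one_mem' n := by
    rw [coeff_one]
    split_ifs <;> simp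
  add_mem' hf hg n := by
    rw [map_add]
    exact add_nonneg (hf n) (hg n)
  zero_mem' n := by simp

lemma X_mem_nonnegCoeff : X ∈ nonnegCoeff R := fun n => by
  rw [coeff_X]
  split_ifs <;> simp

lemma coeff_mul_nonneg_of_le {f g : R⟦X⟧} {n : ℕ} (hf : ∀ i ≤ n, 0 ≤ coeff i f)
    (hg : ∀ i ≤ n, 0 ≤ coeff i g) : 0 ≤ coeff n (f * g) := by
  rw [coeff_mul]
  refine sum_nonneg fun p hp => mul_nonneg (hf _ ?_) (hg _ ?_) <;>
    linarith [mem_antidiagonal.mp hp]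

lemma coeff_one_add_nonneg {f : R⟦X⟧} {n : ℕ} (hf : 0 ≤ coeff n f) :
    0 ≤ coeff n (1 + f) := by
  rw [map_add, coeff_one]
  split_ifs
  · exact add_nonneg zero_le_one hf
  · rwa [zero_add]

lemma mem_nonnegCoeff_of_eq_X_mul_one_add_two_mul_mul_one_add {S : R⟦X⟧}
    (hS : S = X * (1 + 2 * S) * (1 + S)) : S ∈ nonnegCoeff R := by
  intro n
  induction n using Nat.strong_induction_on with
  | _ n ih =>
    rw [hS, mul_assoc]
    rcases n with _ | m
    · simp
    · rw [coeff_succ_X_mul, two_mul]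
      refine coeff_mul_nonneg_of_le (fun i hi => ?_) (fun i hi => ?_) <;>
        refine coeff_one_add_nonneg ?_
      · rw [map_add]
        exact add_nonneg (ih i (by omega)) (ih i (by omega))
      · exact ih i (by omega)

lemma mem_nonnegCoeff_of_eq_add_mul {f g h : R⟦X⟧} (hfix : f = g + h * f)
    (h0 : constantCoeff h = 0) (hg : g ∈ nonnegCoeff R) (hh : h ∈ nonnegCoeff R) :
    f ∈ nonnegCoeff R := by
  intro n
  induction n using Nat.strong_induction_on with
  | _ n ih =>
    rw [hfix, map_add, coeff_mul]
    refine add_nonneg (hg n) (sum_nonneg fun p hp => ?_)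
    rcases Nat.eq_zero_or_pos p.1 with hp1 | hp1
    · simp [hp1, h0]
    · exact mul_nonneg (hh _) (ih _ (by linarith [mem_antidiagonal.mp hp]))

end NonnegCoeff

section Evaluation

variable {t : ℝ}

lemma coeff_mul_pow_nonneg {f : ℝ⟦X⟧} (hf : f ∈ nonnegCoeff ℝ) (ht : 0 ≤ t) (n : ℕ) :
    0 ≤ coeff n f * t ^ n :=
  mul_nonneg (hf n) (pow_nonneg ht n)

lemma coeff_mul_mul_pow (f g : ℝ⟦X⟧) (t : ℝ) (n : ℕ) :
    coeff n (f * g) * t ^ n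
      = ∑ p ∈ antidiagonal n, coeff p.1 f * t ^ p.1 * (coeff p.2 g * t ^ p.2) := by
  rw [coeff_mul, sum_mul]
  refine sum_congr rfl fun p hp => ?_
  rw [← mem_antidiagonal.mp hp, pow_add]
  ring

lemma hasSum_coeff_one_mul_pow : HasSum (fun n => coeff n (1 : ℝ⟦X⟧) * t ^ n) 1 := by
  convert hasSum_ite_eq 0 (1 : ℝ) using 2 with n
  rw [coeff_one]
  split_ifs <;> simp_all

lemma hasSum_coeff_X_mul_pow : HasSum (fun n => coeff n (X : ℝ⟦X⟧) * t ^ n) t := by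
  convert hasSum_ite_eq 1 t using 2 with n
  rw [coeff_X]
  split_ifs <;> simp_all

lemma hasSum_coeff_add_mul_pow {f g : ℝ⟦X⟧} {a b : ℝ}
    (hf : HasSum (fun n => coeff n f * t ^ n) a) (hg : HasSum (fun n => coeff n g * t ^ n) b) :
    HasSum (fun n => coeff n (f + g) * t ^ n) (a + b) := by
  simpa only [map_add, add_mul] using hf.add hg

lemma hasSum_coeff_mul_mul_pow {f g : ℝ⟦X⟧} {a b : ℝ} (hf₀ : f ∈ nonnegCoeff ℝ)
    (hg₀ : g ∈ nonnegCoeff ℝ) (ht : 0 ≤ t)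
    (hf : HasSum (fun n => coeff n f * t ^ n) a) (hg : HasSum (fun n => coeff n g * t ^ n) b) :
    HasSum (fun n => coeff n (f * g) * t ^ n) (a * b) := by
  have hprod := hf.summable.mul_of_nonneg hg.summable
    (coeff_mul_pow_nonneg hf₀ ht) (coeff_mul_pow_nonneg hg₀ ht)
  simp only [coeff_mul_mul_pow]
  rw [← hf.tsum_eq, ← hg.tsum_eq,
    hf.summable.tsum_mul_tsum_eq_tsum_sum_antidiagonal hg.summable hprod]
  exact (summable_sum_mul_antidiagonal_of_summable_mul
    (f := fun n => coeff n f * t ^ n) (g := fun n => coeff n g * t ^ n) hprod).hasSum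

lemma sum_range_coeff_mul_mul_pow_le {f g : ℝ⟦X⟧} (hf₀ : f ∈ nonnegCoeff ℝ)
    (hg₀ : g ∈ nonnegCoeff ℝ) (ht : 0 ≤ t) (N : ℕ) :
    ∑ n ∈ range N, coeff n (f * g) * t ^ n
      ≤ (∑ n ∈ range N, coeff n f * t ^ n) * ∑ n ∈ range N, coeff n g * t ^ n := by
  simp only [coeff_mul_mul_pow]
  exact sum_range_sum_antidiagonal_le_mul (coeff_mul_pow_nonneg hf₀ ht)
    (coeff_mul_pow_nonneg hg₀ ht) N

lemma sum_range_succ_coeff_X_mul_mul_pow (f : ℝ⟦X⟧) (t : ℝ) (N : ℕ) :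
    ∑ n ∈ range (N + 1), coeff n (X * f) * t ^ n
      = t * ∑ n ∈ range N, coeff n f * t ^ n := by
  rw [sum_range_succ', mul_sum]
  simp only [coeff_succ_X_mul, coeff_zero_X_mul, zero_mul, add_zero, pow_succ]
  exact sum_congr rfl fun n _ => by ring

lemma sum_range_coeff_one_mul_pow_le (t : ℝ) (N : ℕ) :
    ∑ n ∈ range N, coeff n (1 : ℝ⟦X⟧) * t ^ n ≤ 1 := by
  simp only [coeff_one, ite_mul, one_mul, zero_mul, sum_ite_eq', pow_zero]
  split_ifs <;> norm_num

lemma hasSum_of_eq_add_mul {f g h : ℝ⟦X⟧} {a b : ℝ} (hfix : f = g + h * f)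
    (h0 : constantCoeff h = 0) (hg₀ : g ∈ nonnegCoeff ℝ) (hh₀ : h ∈ nonnegCoeff ℝ)
    (ht : 0 ≤ t)
    (hg : HasSum (fun n => coeff n g * t ^ n) a) (hh : HasSum (fun n => coeff n h * t ^ n) b)
    (hb : b < 1) :
    HasSum (fun n => coeff n f * t ^ n) (a / (1 - b)) := by
  have hf₀ := mem_nonnegCoeff_of_eq_add_mul hfix h0 hg₀ hh₀
  have hbound : ∀ N, ∑ n ∈ range N, coeff n f * t ^ n ≤ a / (1 - b) := by
    intro N
    rw [le_div_iff₀ (sub_pos.2 hb)]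
    have hs₀ := sum_nonneg fun n (_ : n ∈ range N) => coeff_mul_pow_nonneg hf₀ ht n
    have : ∑ n ∈ range N, coeff n f * t ^ n ≤ a + b * ∑ n ∈ range N, coeff n f * t ^ n :=
      calc ∑ n ∈ range N, coeff n f * t ^ n
          = ∑ n ∈ range N, coeff n g * t ^ n + ∑ n ∈ range N, coeff n (h * f) * t ^ n := by
            conv_lhs => rw [hfix]
            simp only [map_add, add_mul, sum_add_distrib]
        _ ≤ a + (∑ n ∈ range N, coeff n h * t ^ n) * ∑ n ∈ range N, coeff n f * t ^ n :=
            add_le_add (sum_le_hasSum _ (fun n _ => coeff_mul_pow_nonneg hg₀ ht n) hg)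
              (sum_range_coeff_mul_mul_pow_le hh₀ hf₀ ht N)
        _ ≤ a + b * ∑ n ∈ range N, coeff n f * t ^ n := by
            gcongr
            exact sum_le_hasSum _ (fun n _ => coeff_mul_pow_nonneg hh₀ ht n) hh
    linarith
  obtain ⟨F, hF⟩ := summable_of_sum_range_le (coeff_mul_pow_nonneg hf₀ ht) hbound
  have hFfix := hasSum_coeff_add_mul_pow hg (hasSum_coeff_mul_mul_pow hh₀ hf₀ ht hh hF)
  rw [← hfix] at hFfix
  convert hF using 1
  rw [div_eq_iff (sub_pos.2 hb).ne']
  linarith [hF.unique hFfix]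

lemma hasSum_add_sq_mul_inv_one_sub {S R : ℝ⟦X⟧} {a b : ℝ} (hS₀ : S ∈ nonnegCoeff ℝ)
    (hR₀ : R ∈ nonnegCoeff ℝ) (hRc : constantCoeff R = 0) (ht : 0 ≤ t)
    (hS : HasSum (fun n => coeff n S * t ^ n) a) (hR : HasSum (fun n => coeff n R * t ^ n) b)
    (hb : b < 1) :
    HasSum (fun n => coeff n (S + S ^ 2 * (1 - R)⁻¹) * t ^ n) (a + a ^ 2 / (1 - b)) := by
  have hE : (1 - R)⁻¹ = 1 + R * (1 - R)⁻¹ := by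
    linear_combination PowerSeries.mul_inv_cancel (1 - R) (by simp [hRc])
  have hE₀ := mem_nonnegCoeff_of_eq_add_mul hE hRc (one_mem _) hR₀
  have hEsum := hasSum_of_eq_add_mul hE hRc (one_mem _) hR₀ ht hasSum_coeff_one_mul_pow hR hb
  rw [show a + a ^ 2 / (1 - b) = a + a * a * (1 / (1 - b)) by ring, sq]
  exact hasSum_coeff_add_mul_pow hS (hasSum_coeff_mul_mul_pow (mul_mem hS₀ hS₀) hE₀ ht
    (hasSum_coeff_mul_mul_pow hS₀ hS₀ ht hS hS) hEsum)

lemma sum_range_le_of_eq_X_mul_one_add_two_mul_mul_one_add {S : ℝ⟦X⟧} {σ : ℝ}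
    (hS : S = X * (1 + 2 * S) * (1 + S)) (ht : 0 ≤ t) (hσ₀ : 0 ≤ σ)
    (hσ : t * (1 + 2 * σ) * (1 + σ) = σ) (N : ℕ) :
    ∑ n ∈ range N, coeff n S * t ^ n ≤ σ := by
  have hS₀ := mem_nonnegCoeff_of_eq_X_mul_one_add_two_mul_mul_one_add hS
  have hS' : S = X * ((1 + S + S) * (1 + S)) := by linear_combination hS
  induction N with
  | zero => simpa using hσ₀
  | succ N ih =>
    have hs₀ := sum_nonneg fun n (_ : n ∈ range N) => coeff_mul_pow_nonneg hS₀ ht n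
    have h1₀ := sum_nonneg fun n (_ : n ∈ range N) => coeff_mul_pow_nonneg (one_mem _) ht n
    have h1 := sum_range_coeff_one_mul_pow_le t N
    calc ∑ n ∈ range (N + 1), coeff n S * t ^ n
        = t * ∑ n ∈ range N, coeff n ((1 + S + S) * (1 + S)) * t ^ n := by
          conv_lhs => rw [hS']
          exact sum_range_succ_coeff_X_mul_mul_pow _ t N
      _ ≤ t * ((∑ n ∈ range N, coeff n (1 + S + S) * t ^ n) *
            ∑ n ∈ range N, coeff n (1 + S) * t ^ n) := by
          gcongr
          exact sum_range_coeff_mul_mul_pow_le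
            (add_mem (add_mem (one_mem _) hS₀) hS₀) (add_mem (one_mem _) hS₀) ht N
      _ ≤ t * ((1 + σ + σ) * (1 + σ)) := by
          simp only [map_add, add_mul, sum_add_distrib]
          gcongr
      _ = σ := by linear_combination hσ

lemma hasSum_of_eq_X_mul_one_add_two_mul_mul_one_add {S : ℝ⟦X⟧} {q : ℝ}
    (hS : S = X * (1 + 2 * S) * (1 + S)) (ht₀ : 0 < t) (hq : q ^ 2 = 1 - 6 * t + t ^ 2)
    (hq₀ : 0 < q) (hq₁ : q < 1 - 3 * t) :
    HasSum (fun n => coeff n S * t ^ n) ((1 - 3 * t - q) / (4 * t)) := by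
  set σ := (1 - 3 * t - q) / (4 * t)
  have hσ4 : 4 * t * σ = 1 - 3 * t - q := mul_div_cancel₀ _ (by positivity)
  have hσ₀ : 0 ≤ σ := div_nonneg (by linarith) (by positivity)
  clear_value σ
  have hσ : t * (1 + 2 * σ) * (1 + σ) = σ := by
    apply mul_left_cancel₀ (show 8 * t ≠ 0 by positivity)
    linear_combination (4 * t * σ - (1 - 3 * t) - q) * hσ4 + hq
  have hS₀ := mem_nonnegCoeff_of_eq_X_mul_one_add_two_mul_mul_one_add hS
  have hbound := sum_range_le_of_eq_X_mul_one_add_two_mul_mul_one_add hS ht₀.le hσ₀ hσ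
  have hterm := coeff_mul_pow_nonneg hS₀ ht₀.le
  obtain ⟨L, hL⟩ := summable_of_sum_range_le hterm hbound
  have hLσ : L ≤ σ := hL.tsum_eq ▸ Real.tsum_le_of_sum_range_le hterm hbound
  have hLfix : L = t * ((1 + L + L) * (1 + L)) := by
    have hS₁ : (1 : ℝ⟦X⟧) + S ∈ nonnegCoeff ℝ := add_mem (one_mem _) hS₀
    have hS₂ : 1 + S + S ∈ nonnegCoeff ℝ := add_mem hS₁ hS₀
    refine hL.unique ?_
    rw [show S = X * ((1 + S + S) * (1 + S)) by linear_combination hS]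
    exact hasSum_coeff_mul_mul_pow X_mem_nonnegCoeff (mul_mem hS₂ hS₁) ht₀.le
      hasSum_coeff_X_mul_pow (hasSum_coeff_mul_mul_pow hS₂ hS₁ ht₀.le
        (hasSum_coeff_add_mul_pow (hasSum_coeff_add_mul_pow hasSum_coeff_one_mul_pow hL) hL)
        (hasSum_coeff_add_mul_pow hasSum_coeff_one_mul_pow hL))
  -- `L` and `σ` are roots of the same quadratic, and the other root exceeds `σ`.
  have hroots : (L - σ) * (2 * t * (L + σ) + 3 * t - 1) = 0 := by
    linear_combination -hσ - hLfix
  have hneg : 2 * t * (L + σ) + 3 * t - 1 < 0 := by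
    nlinarith [mul_le_mul_of_nonneg_left hLσ (by positivity : (0 : ℝ) ≤ 2 * t)]
  rw [← sub_eq_zero.mp ((mul_eq_zero.mp hroots).resolve_right hneg.ne)]
  exact hL

end Evaluation

end PowerSeries

section ClosedForm

variable {t q σ : ℝ}

lemma one_sub_six_mul_add_sq_pos (ht : t < 3 - √8) : 0 < 1 - 6 * t + t ^ 2 := by
  have h8 : √8 ^ 2 = 8 := Real.sq_sqrt (by norm_num)
  nlinarith [Real.sqrt_nonneg 8]

lemma sqrt_one_sub_six_mul_add_sq_lt (ht₀ : 0 < t) (ht : t < 3 - √8) :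
    √(1 - 6 * t + t ^ 2) < 1 - 3 * t := by
  have h8 : √8 ^ 2 = 8 := Real.sq_sqrt (by norm_num)
  rw [Real.sqrt_lt' (by nlinarith [Real.sqrt_nonneg 8])]
  nlinarith

lemma four_mul_mul_one_sub_add_mul_one_add (hσ : 4 * t * σ = 1 - 3 * t - q)
    (hq : q ^ 2 = 1 - 6 * t + t ^ 2) :
    4 * t * (1 - (σ + t * (1 + σ))) = q * (1 + t - q) := by
  linear_combination -(1 + t) * hσ + hq

lemma add_mul_one_add_lt_one (ht₀ : 0 < t) (hσ : 4 * t * σ = 1 - 3 * t - q)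
    (hq : q ^ 2 = 1 - 6 * t + t ^ 2) (hq₀ : 0 < q) (hq₁ : q < 1 - 3 * t) :
    σ + t * (1 + σ) < 1 := by
  have : 0 < 4 * t * (1 - (σ + t * (1 + σ))) := by
    rw [four_mul_mul_one_sub_add_mul_one_add hσ hq]
    exact mul_pos hq₀ (by linarith)
  linarith [pos_of_mul_pos_right this (by positivity)]

lemma add_sq_div_one_sub_add_mul_one_add (ht₀ : 0 < t) (hσ : 4 * t * σ = 1 - 3 * t - q)
    (hq : q ^ 2 = 1 - 6 * t + t ^ 2) (hq₀ : 0 < q) (hq₁ : q < 1 - 3 * t) :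
    σ + σ ^ 2 / (1 - (σ + t * (1 + σ))) = 1 / 4 * ((1 + t) / q - 1) := by
  have hW₀ := sub_pos.2 (add_mul_one_add_lt_one ht₀ hσ hq hq₀ hq₁)
  have hsq : 4 * (4 * t * σ) * (1 - t) - (4 * t * σ) ^ 2 = (1 + t - q) ^ 2 := by
    rw [hσ]
    linear_combination (-2) * hq
  field_simp
  apply mul_left_cancel₀ (show 4 * t ≠ 0 by positivity)
  linear_combination q * hsq - (1 + t - q) * four_mul_mul_one_sub_add_mul_one_add hσ hq

end ClosedForm

open PowerSeries in
theorem dirAnimalGF_sum_formula_general (S R D : PowerSeries ℝ)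
    (hS : S = X * (1 + 2 * S) * (1 + S))
    (hR : R = S + X * (1 + S))
    (hD : D = S + S ^ 2 * (1 - R)⁻¹) :
    ∀ t : ℝ, 0 < t → t < 3 - Real.sqrt 8 →
      Summable (fun n : ℕ => coeff n D * t ^ n) ∧
      ∑' n : ℕ, coeff n D * t ^ n
        = (1 / 4) * ((1 + t) / Real.sqrt (1 - 6 * t + t ^ 2) - 1) := by
  intro t ht₀ ht
  have hq := Real.sq_sqrt (one_sub_six_mul_add_sq_pos ht).le
  have hq₀ := Real.sqrt_pos.2 (one_sub_six_mul_add_sq_pos ht)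
  have hq₁ := sqrt_one_sub_six_mul_add_sq_lt ht₀ ht
  generalize √(1 - 6 * t + t ^ 2) = q at hq hq₀ hq₁ ⊢
  have hσ := hasSum_of_eq_X_mul_one_add_two_mul_mul_one_add hS ht₀ hq hq₀ hq₁
  have hσ4 : 4 * t * ((1 - 3 * t - q) / (4 * t)) = 1 - 3 * t - q :=
    mul_div_cancel₀ _ (by positivity)
  have hS₀ := mem_nonnegCoeff_of_eq_X_mul_one_add_two_mul_mul_one_add hS
  have hS₁ : 1 + S ∈ nonnegCoeff ℝ := add_mem (one_mem _) hS₀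
  have hRsum := hasSum_coeff_add_mul_pow hσ (hasSum_coeff_mul_mul_pow X_mem_nonnegCoeff hS₁
    ht₀.le hasSum_coeff_X_mul_pow (hasSum_coeff_add_mul_pow hasSum_coeff_one_mul_pow hσ))
  rw [← hR] at hRsum
  have hR₀ : R ∈ nonnegCoeff ℝ := hR ▸ add_mem hS₀ (mul_mem X_mem_nonnegCoeff hS₁)
  have hRc : constantCoeff R = 0 := by rw [hR, hS]; simp
  have hDsum := hasSum_add_sq_mul_inv_one_sub hS₀ hR₀ hRc ht₀.le hσ hRsum
    (add_mul_one_add_lt_one ht₀ hσ4 hq hq₀ hq₁)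
  rw [← hD] at hDsum
  exact ⟨hDsum.summable,
    hDsum.tsum_eq.trans (add_sq_div_one_sub_add_mul_one_add ht₀ hσ4 hq hq₀ hq₁)⟩

open PowerSeries in
theorem dirAnimalGF_sum_formula (S R D : PowerSeries ℝ)
    (hS0 : constantCoeff S = 0)
    (hS : S = X * (1 + 2 * S) * (1 + S))
    (hR : R = S + X * (1 + S))
    (hD : D = S + S ^ 2 * (1 - R)⁻¹) :
    ∀ t : ℝ, 0 < t → t < 3 - Real.sqrt 8 →
      Summable (fun n : ℕ => coeff n D * t ^ n) ∧
      ∑' n : ℕ, coeff n D * t ^ n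
        = (1 / 4) * ((1 + t) / Real.sqrt (1 - 6 * t + t ^ 2) - 1) :=
  dirAnimalGF_sum_formula_general S R D hS hR hD
end

section
/- The Nordic decomposition is a bijection between connected heaps of polymers that are not pyramids, taken up to translation, and quadruples (C₁, k, H, P) where: C₁ is a connected heap of polymers taken up to translation; k is a non-negative integer; H is a heap all of whose polymers are contained in [0, k−1]; and P is a pyramid of left half-width greater than k, taken up to translation. Under this bijection, the total length of the heap equals the sum of the total lengths of C₁, H and P. -/
/-!
STATEMENT 9: The Nordic decomposition is a bijection between connected heaps of
polymers that are not pyramids (up to translation) and quadruples `(C₁, k, H, P)`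
where `C₁` is a connected heap (up to translation), `k : ℕ`, `H` is a heap all of
whose polymers are contained in `[0, k-1]`, and `P` is a pyramid of left
half-width greater than `k` (up to translation); the total length of the heap is
the sum of the total lengths of `C₁`, `H` and `P`.

Translation classes are normalized: for arbitrary heaps, by requiring the least
left endpoint of their polymers to be `0`; for pyramids, by requiring the minimal
polymer to have left endpoint `0`.
-/

/-- A polymer is a closed real interval `[i,j]` with integer endpoints `i < j`,
encoded by the pair of endpoints. -/
def Polymer : Type := {p : ℤ × ℤ // p.1 < p.2}

/-- The left endpoint of a polymer. -/
def Polymer.left (a : Polymer) : ℤ := a.1.1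

/-- The right endpoint of a polymer. -/
def Polymer.right (a : Polymer) : ℤ := a.1.2

/-- The length of a polymer `[i,j]` is `j - i` (a positive integer, recorded in `ℕ`). -/
def Polymer.len (a : Polymer) : ℕ := (a.1.2 - a.1.1).toNat

/-- Two polymers are concurrent if the closed intervals intersect (even in a point). -/
def Polymer.Concurrent (a b : Polymer) : Prop := a.left ≤ b.right ∧ b.left ≤ a.right

/-- One step of the commutation relation on sequences of polymers:
two adjacent non-concurrent polymers are transposed. -/
def HeapStep (L L' : List Polymer) : Prop :=
  ∃ (l₁ l₂ : List Polymer) (a b : Polymer), ¬ a.Concurrent b ∧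
    L = l₁ ++ a :: b :: l₂ ∧ L' = l₁ ++ b :: a :: l₂

/-- A heap of polymers: a finite sequence of polymers up to commutation of
adjacent non-concurrent polymers. -/
def Heap : Type := Quot HeapStep

/-- The multiset of polymers of a heap. -/
def Heap.toMultiset : Heap → Multiset Polymer :=
  Quot.lift (fun L => (L : Multiset Polymer)) (by
    rintro L L' ⟨l₁, l₂, a, b, -, rfl, rfl⟩
    exact Multiset.coe_eq_coe.mpr (List.Perm.append_left l₁ (List.Perm.swap b a l₂)))

/-- The total length of a heap: the sum of the lengths of its polymers. -/
def Heap.totalLength (H : Heap) : ℕ := (H.toMultiset.map Polymer.len).sum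

/-- A polymer `a` is minimal in the heap `H` if `H` can be written `a · H'`. -/
def Heap.IsMinimal (H : Heap) (a : Polymer) : Prop :=
  ∃ L : List Polymer, H = Quot.mk HeapStep (a :: L)

/-- A pyramid is a heap with a unique minimal polymer. -/
def Heap.IsPyramid (H : Heap) : Prop := ∃! a : Polymer, H.IsMinimal a

/-- The subset of `ℝ` covered by the polymers of a heap. -/
def Heap.space (H : Heap) : Set ℝ :=
  ⋃ p ∈ H.toMultiset, Set.Icc (p.1.1 : ℝ) (p.1.2 : ℝ)

/-- A heap is connected if it is nonempty and the union of its polymers is a real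
interval (an order-connected subset of `ℝ`). -/
def Heap.IsConnected (H : Heap) : Prop :=
  H.toMultiset ≠ 0 ∧ H.space.OrdConnected

/-- Normalization of a heap up to translation: the least left endpoint among its
polymers is `0`. -/
def Heap.Normalized (H : Heap) : Prop :=
  (∀ p ∈ H.toMultiset, 0 ≤ p.left) ∧ (∃ p ∈ H.toMultiset, p.left = 0)

/-- Normalization of a pyramid up to translation: its minimal polymer has left
endpoint `0`. -/
def Heap.PyramidNormalized (H : Heap) : Prop :=
  ∃ a : Polymer, H.IsMinimal a ∧ a.left = 0

/-- The pyramid `H` has left half-width `w`: its minimal polymer is `[a,b]` and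
the least left endpoint among its polymers is `a - w`. -/
def Heap.HasLeftHalfWidth (H : Heap) (w : ℕ) : Prop :=
  ∃ a : Polymer, H.IsMinimal a ∧ (∀ p ∈ H.toMultiset, a.left - (w : ℤ) ≤ p.left) ∧
    (∃ p ∈ H.toMultiset, p.left = a.left - (w : ℤ))

/-- The quadruples `(C₁, k, H, P)` appearing in the Nordic decomposition:
`C₁` is a connected heap (normalized up to translation), `k : ℕ`, `H` is a heap
all of whose polymers are contained in `[0, k-1]`, and `P` is a pyramid of left
half-width greater than `k` (normalized up to translation). -/
def NordicQuad (q : Heap × ℕ × Heap × Heap) : Prop :=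
  q.1.IsConnected ∧ q.1.Normalized ∧
  (∀ p ∈ q.2.2.1.toMultiset, 0 ≤ p.left ∧ p.right ≤ (q.2.1 : ℤ) - 1) ∧
  q.2.2.2.IsPyramid ∧ q.2.2.2.PyramidNormalized ∧
  (∃ w : ℕ, q.2.2.2.HasLeftHalfWidth w ∧ q.2.1 < w)

/-!
A connected heap that is not a pyramid is rebuilt from its quadruple `(C₁, k, H, P)` by placing
`C₁` with right end `-1`, then `H`, then `P` with its minimal polymer at `k`, and normalizing
(`compose`); total lengths visibly add up, so everything rests on `compose` being a bijection.
Both directions go through words `first · middle · α · top` (`NordicForm`).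

Surjectivity: pushing the rightmost minimal polymer `α` of `C` writes `C = C' · P`. Every polymer
of `C'` lies left of `α`: otherwise the first polymer of its connected component would be minimal
in `C`, hence left of `α`, and the component, which covers an interval, would meet `α`. Splitting
off the component of the leftmost polymer of `C'` gives `C₁` and `H`, and connectivity of `C`
forces `P` to reach below the right end of `C₁`, which is the condition `k < w`.

Injectivity: in such a word `α` is the rightmost minimal polymer, so by left cancellation (from
the projection lemma for heaps) and uniqueness of pushing, `P` and `C₁ · H` are determined by the
heap; `C₁` is then the component of the leftmost polymer of `C₁ · H`.
-/

noncomputable section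

open scoped Classical

/-! ### Heaps as words up to commutation -/

def Heap.mk (L : List Polymer) : Heap := Quot.mk HeapStep L

notation:max "⟦" L "⟧ₕ" => Heap.mk L

@[elab_as_elim, induction_eliminator]
theorem Heap.ind {motive : Heap → Prop} (mk : ∀ L, motive ⟦L⟧ₕ) (H : Heap) : motive H :=
  Quot.ind mk H

namespace Polymer

variable {a b : Polymer} {s t : ℤ}

theorem left_lt_right (a : Polymer) : a.left < a.right := a.2

theorem concurrent_refl (a : Polymer) : a.Concurrent a := ⟨a.2.le, a.2.le⟩

theorem Concurrent.symm (h : a.Concurrent b) : b.Concurrent a := ⟨h.2, h.1⟩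

theorem not_concurrent_iff : ¬a.Concurrent b ↔ b.right < a.left ∨ a.right < b.left := by
  unfold Concurrent; omega

def interval (a : Polymer) : Set ℝ := Set.Icc (a.left : ℝ) a.right

theorem left_mem_interval (a : Polymer) : (a.left : ℝ) ∈ a.interval :=
  Set.left_mem_Icc.mpr (by exact_mod_cast a.2.le)

theorem right_mem_interval (a : Polymer) : (a.right : ℝ) ∈ a.interval :=
  Set.right_mem_Icc.mpr (by exact_mod_cast a.2.le)

theorem concurrent_of_mem_interval {z : ℝ} (ha : z ∈ a.interval) (hb : z ∈ b.interval) :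
    a.Concurrent b :=
  ⟨by exact_mod_cast ha.1.trans hb.2, by exact_mod_cast hb.1.trans ha.2⟩

theorem Concurrent.inter_nonempty (h : a.Concurrent b) :
    (a.interval ∩ b.interval).Nonempty := by
  have ha : max a.left b.left ≤ a.right := max_le a.2.le h.2
  have hb : max a.left b.left ≤ b.right := max_le h.1 b.2.le
  exact ⟨(max a.left b.left : ℤ), ⟨by exact_mod_cast le_max_left .., by exact_mod_cast ha⟩,
    by exact_mod_cast le_max_right .., by exact_mod_cast hb⟩

def shift (t : ℤ) (a : Polymer) : Polymer :=
  ⟨(a.left + t, a.right + t), add_lt_add_left a.2 t⟩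

@[simp] theorem left_shift : (a.shift t).left = a.left + t := rfl

@[simp] theorem right_shift : (a.shift t).right = a.right + t := rfl

@[simp] theorem len_shift : (a.shift t).len = a.len :=
  congrArg Int.toNat (add_sub_add_right_eq_sub a.right a.left t)

@[simp] theorem shift_shift : (a.shift s).shift t = a.shift (s + t) :=
  Subtype.ext <| Prod.ext (add_assoc _ _ _) (add_assoc _ _ _)

@[simp] theorem shift_zero : a.shift 0 = a :=
  Subtype.ext <| Prod.ext (add_zero _) (add_zero _)

@[simp] theorem concurrent_shift : (a.shift t).Concurrent (b.shift t) ↔ a.Concurrent b := by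
  simp only [Concurrent, left_shift, right_shift, add_le_add_iff_right]

theorem interval_shift : (a.shift t).interval = (· + (t : ℝ)) '' a.interval := by
  simp [interval]

end Polymer

variable {a b x : Polymer} {L L' u v : List Polymer}

theorem HeapStep.append_left (u : List Polymer) (h : HeapStep L L') :
    HeapStep (u ++ L) (u ++ L') := by
  obtain ⟨l₁, l₂, a, b, hab, rfl, rfl⟩ := h
  exact ⟨u ++ l₁, l₂, a, b, hab, by simp, by simp⟩

theorem HeapStep.append_right (h : HeapStep L L') (v : List Polymer) :
    HeapStep (L ++ v) (L' ++ v) := by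
  obtain ⟨l₁, l₂, a, b, hab, rfl, rfl⟩ := h
  exact ⟨l₁, l₂ ++ v, a, b, hab, by simp, by simp⟩

theorem HeapStep.map_shift (t : ℤ) (h : HeapStep L L') :
    HeapStep (L.map (Polymer.shift t)) (L'.map (Polymer.shift t)) := by
  obtain ⟨l₁, l₂, a, b, hab, rfl, rfl⟩ := h
  exact ⟨l₁.map (Polymer.shift t), l₂.map (Polymer.shift t), a.shift t, b.shift t,
    by simpa using hab, by simp, by simp⟩

namespace Heap

variable {H H₁ H₂ : Heap} {s t r : ℤ}

instance : Mul Heap :=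
  ⟨Quot.map₂ (· ++ ·) (fun u _ _ h => h.append_left u) (fun _ _ v h => h.append_right v)⟩

theorem mk_append (u v : List Polymer) : ⟦u ++ v⟧ₕ = ⟦u⟧ₕ * ⟦v⟧ₕ := rfl

theorem mk_cons (a : Polymer) (L : List Polymer) : ⟦a :: L⟧ₕ = ⟦[a]⟧ₕ * ⟦L⟧ₕ := rfl

theorem mk_cons_congr (a : Polymer) (h : ⟦L⟧ₕ = ⟦L'⟧ₕ) : ⟦a :: L⟧ₕ = ⟦a :: L'⟧ₕ := by
  rw [mk_cons, h, ← mk_cons]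

theorem mk_cons_cons_swap (h : ¬a.Concurrent b) (L : List Polymer) :
    ⟦a :: b :: L⟧ₕ = ⟦b :: a :: L⟧ₕ :=
  Quot.sound ⟨[], L, a, b, h, rfl, rfl⟩

theorem mk_append_cons (hu : ∀ y ∈ u, ¬y.Concurrent x) (v : List Polymer) :
    ⟦u ++ x :: v⟧ₕ = ⟦x :: (u ++ v)⟧ₕ := by
  induction u with
  | nil => rfl
  | cons y u ih =>
    rw [List.cons_append, mk_cons_congr y (ih fun z hz => hu z (.tail _ hz)),
      mk_cons_cons_swap (hu y (.head _)), List.cons_append]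

theorem toMultiset_mk (L : List Polymer) : Heap.toMultiset ⟦L⟧ₕ = (L : Multiset Polymer) := rfl

@[simp] theorem mem_toMultiset_mk : x ∈ Heap.toMultiset ⟦L⟧ₕ ↔ x ∈ L := Multiset.mem_coe

theorem toMultiset_mk_eq_zero : Heap.toMultiset ⟦L⟧ₕ = 0 ↔ L = [] := Multiset.coe_eq_zero L

theorem exists_eq_mk (H : Heap) : ∃ L, H = ⟦L⟧ₕ := (Quot.exists_rep H).imp fun _ h => h.symm

theorem toMultiset_mul (H₁ H₂ : Heap) : (H₁ * H₂).toMultiset = H₁.toMultiset + H₂.toMultiset := by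
  induction H₁
  induction H₂
  exact (Multiset.coe_add _ _).symm

theorem totalLength_mul (H₁ H₂ : Heap) :
    (H₁ * H₂).totalLength = H₁.totalLength + H₂.totalLength := by
  simp [totalLength, toMultiset_mul]

theorem mem_of_mk_eq (h : ⟦L⟧ₕ = ⟦L'⟧ₕ) (hx : x ∈ L) : x ∈ L' := by
  have := congrArg toMultiset h
  rw [toMultiset_mk, toMultiset_mk, Multiset.coe_eq_coe] at this
  exact this.subset hx

def proj (a b : Polymer) (L : List Polymer) : List Polymer :=
  L.filter fun c => c = a ∨ c = b

theorem proj_cons (a b x : Polymer) (L : List Polymer) :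
    proj a b (x :: L) = if x = a ∨ x = b then x :: proj a b L else proj a b L := by
  by_cases h : x = a ∨ x = b <;> simp [proj, h]

theorem proj_append (a b : Polymer) (u v : List Polymer) :
    proj a b (u ++ v) = proj a b u ++ proj a b v := by
  simp [proj]

theorem proj_congr (hab : a.Concurrent b) (h : ⟦L⟧ₕ = ⟦L'⟧ₕ) : proj a b L = proj a b L' := by
  refine congrArg (Quot.lift (proj a b) ?_) h
  rintro _ _ ⟨l₁, l₂, x, y, hxy, rfl, rfl⟩
  simp only [proj_append, proj_cons]
  by_cases hx : x = a ∨ x = b <;> by_cases hy : y = a ∨ y = b <;> simp only [hx, hy, if_true,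
    if_false]
  exfalso
  rcases hx with rfl | rfl <;> rcases hy with rfl | rfl
  exacts [hxy (Polymer.concurrent_refl _), hxy hab, hxy hab.symm, hxy (Polymer.concurrent_refl _)]

theorem exists_eq_append_cons_of_proj
    (h : ∀ y, x.Concurrent y → proj x y (x :: L) = proj x y L') :
    ∃ u v, L' = u ++ x :: v ∧ ∀ y ∈ u, ¬y.Concurrent x := by
  have hx : x ∈ L' := by
    have := h x (Polymer.concurrent_refl x)
    rw [proj_cons, if_pos (Or.inl rfl)] at this
    exact (List.mem_filter.mp (this ▸ List.mem_cons_self : x ∈ proj x x L')).1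
  obtain ⟨u, v, rfl, hxu⟩ := List.eq_append_cons_of_mem hx
  refine ⟨u, v, rfl, fun y hy hyx => hxu ?_⟩
  have hproj := h y hyx.symm
  rw [proj_cons, if_pos (Or.inl rfl), proj_append] at hproj
  have hyu : y ∈ proj x y u := List.mem_filter.mpr ⟨hy, by simp⟩
  obtain ⟨z, w, hzw⟩ := List.exists_cons_of_ne_nil (List.ne_nil_of_mem hyu)
  rw [hzw, List.cons_append, List.cons.injEq] at hproj
  exact hproj.1 ▸ (List.mem_filter.mp (hzw ▸ List.mem_cons_self : z ∈ proj x y u)).1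

theorem mk_eq_mk_of_proj (h : ∀ a b, a.Concurrent b → proj a b L = proj a b L') :
    ⟦L⟧ₕ = ⟦L'⟧ₕ := by
  induction L generalizing L' with
  | nil =>
    cases L' with
    | nil => rfl
    | cons y t => simpa [proj] using h y y (Polymer.concurrent_refl y)
  | cons x t ih =>
    obtain ⟨u, v, rfl, hu⟩ := exists_eq_append_cons_of_proj fun y hxy => h x y hxy
    rw [mk_append_cons hu]
    refine mk_cons_congr x (ih fun a b hab => ?_)
    have hab' := h a b hab
    rw [proj_cons, proj_append, proj_cons] at hab'
    by_cases hx : x = a ∨ x = b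
    · have hu_nil : proj a b u = [] := by
        refine List.filter_eq_nil_iff.mpr fun y hy hyab => ?_
        have hyab : y = a ∨ y = b := by simpa using hyab
        apply hu y hy
        rcases hx with rfl | rfl <;> rcases hyab with rfl | rfl
        exacts [Polymer.concurrent_refl _, hab.symm, hab, Polymer.concurrent_refl _]
      rw [if_pos hx, if_pos hx, hu_nil, List.nil_append, List.cons.injEq] at hab'
      rw [proj_append, hu_nil, hab'.2, List.nil_append]
    · rwa [if_neg hx, if_neg hx, ← proj_append] at hab'

theorem mk_cons_cancel (h : ⟦x :: L⟧ₕ = ⟦x :: L'⟧ₕ) : ⟦L⟧ₕ = ⟦L'⟧ₕ := by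
  refine mk_eq_mk_of_proj fun a b hab => ?_
  have := proj_congr hab h
  rw [proj_cons, proj_cons] at this
  split_ifs at this
  exacts [List.tail_eq_of_cons_eq this, this]

theorem isMinimal_mk_iff :
    (⟦L⟧ₕ).IsMinimal a ↔ ∃ u v, L = u ++ a :: v ∧ ∀ y ∈ u, ¬y.Concurrent a := by
  constructor
  · rintro ⟨T, hT⟩
    exact exists_eq_append_cons_of_proj fun y hay => proj_congr hay hT.symm
  · rintro ⟨u, v, rfl, hu⟩
    exact ⟨u ++ v, mk_append_cons hu v⟩

theorem isMinimal_iff : H.IsMinimal a ↔ ∃ T, H = ⟦a :: T⟧ₕ := Iff.rfl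

theorem IsMinimal.mem (h : H.IsMinimal a) : a ∈ H.toMultiset := by
  obtain ⟨T, rfl⟩ := h
  exact List.mem_cons_self

theorem IsMinimal.not_concurrent (ha : H.IsMinimal a) (hb : H.IsMinimal b) (hab : a ≠ b) :
    ¬a.Concurrent b := by
  obtain ⟨T, rfl⟩ := ha
  obtain ⟨_ | ⟨z, u⟩, v, huv, hu⟩ := isMinimal_mk_iff.mp hb
  · exact absurd (List.cons.inj huv).1 hab
  · rw [List.cons_append, List.cons.injEq] at huv
    exact fun hc => hu z (.head _) (huv.1 ▸ hc)

theorem IsMinimal.of_mk_append (h : (⟦u ++ v⟧ₕ).IsMinimal b) (hb : b ∉ u) :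
    (⟦v⟧ₕ).IsMinimal b := by
  obtain ⟨u', v', huv, hu'⟩ := isMinimal_mk_iff.mp h
  rcases List.append_eq_append_iff.mp huv with ⟨w, rfl, rfl⟩ | ⟨_ | ⟨c, w⟩, rfl, hw⟩
  · exact isMinimal_mk_iff.mpr ⟨w, v', rfl, fun y hy => hu' y (List.mem_append_right u hy)⟩
  · exact isMinimal_mk_iff.mpr ⟨[], v', by simpa using hw.symm, by simp⟩
  · rw [List.cons_append, List.cons.injEq] at hw
    exact absurd (hw.1 ▸ List.mem_append_right u' List.mem_cons_self) hb

def IsRightmostMinimal (H : Heap) (a : Polymer) : Prop :=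
  H.IsMinimal a ∧ ∀ b, H.IsMinimal b → b.left ≤ a.left

theorem exists_isRightmostMinimal (hH : H.toMultiset ≠ 0) : ∃ a, H.IsRightmostMinimal a := by
  induction H with | mk L => ?_
  obtain ⟨x, t, rfl⟩ := List.exists_cons_of_ne_nil (mt toMultiset_mk_eq_zero.mpr hH)
  have hne : (Heap.toMultiset ⟦x :: t⟧ₕ).filter (⟦x :: t⟧ₕ).IsMinimal ≠ 0 := fun h0 =>
    Multiset.notMem_zero x (h0 ▸ Multiset.mem_filter.mpr ⟨List.mem_cons_self, t, rfl⟩)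
  obtain ⟨a, ha, hmax⟩ := Multiset.exists_max_image Polymer.left hne
  exact ⟨a, (Multiset.mem_filter.mp ha).2,
    fun b hb => hmax b (Multiset.mem_filter.mpr ⟨hb.mem, hb⟩)⟩

theorem IsRightmostMinimal.unique (ha : H.IsRightmostMinimal a) (hb : H.IsRightmostMinimal b) :
    a = b := by
  by_contra hab
  have := Polymer.not_concurrent_iff.mp (ha.1.not_concurrent hb.1 hab)
  have := ha.2 b hb.1
  have := hb.2 a ha.1
  have := a.left_lt_right
  have := b.left_lt_right
  omega

theorem mk_eq_filter_append_filter (p : Polymer → Bool)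
    (hp : ∀ x ∈ L, ∀ y ∈ L, p x → ¬p y → ¬x.Concurrent y) :
    ⟦L⟧ₕ = ⟦L.filter p ++ L.filter (!p ·)⟧ₕ := by
  induction L with
  | nil => rfl
  | cons x t ih =>
    have ih := ih fun y hy z hz => hp y (.tail _ hy) z (.tail _ hz)
    by_cases hx : p x
    · simpa [hx] using mk_cons_congr x ih
    · rw [mk_cons_congr x ih]
      have : ∀ y ∈ t.filter p, ¬y.Concurrent x := fun y hy => by
        rw [List.mem_filter] at hy
        exact hp y (.tail _ hy.1) x (.head _) hy.2 hx
      simpa [hx] using (mk_append_cons this _).symm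

theorem mk_filter_congr (p : Polymer → Bool) (h : ⟦L⟧ₕ = ⟦L'⟧ₕ) :
    ⟦L.filter p⟧ₕ = ⟦L'.filter p⟧ₕ := by
  refine congrArg (Quot.lift (fun L => ⟦L.filter p⟧ₕ) ?_) h
  rintro _ _ ⟨l₁, l₂, x, y, hxy, rfl, rfl⟩
  simp only [List.filter_append, List.filter_cons, mk_append]
  congr 1
  split_ifs <;> first | rfl | exact mk_cons_cons_swap hxy _

theorem exists_isMinimal_of_separated (p : Polymer → Bool)
    (hp : ∀ x ∈ L, ∀ y ∈ L, p x → ¬p y → ¬x.Concurrent y) (hne : ∃ x ∈ L, p x)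
    (v : List Polymer) : ∃ f ∈ L, p f ∧ (⟦L ++ v⟧ₕ).IsMinimal f := by
  have hsep : ⟦L⟧ₕ = ⟦L.filter (!p ·) ++ L.filter p⟧ₕ := by
    simpa using mk_eq_filter_append_filter (!p ·) fun x hx y hy hx' hy' hc =>
      hp y hy x hx (by simpa using hy') (by simpa using hx') hc.symm
  obtain ⟨x, hx, hpx⟩ := hne
  obtain ⟨f, w, hfw⟩ := List.exists_cons_of_ne_nil
    (List.ne_nil_of_mem (List.mem_filter.mpr ⟨hx, hpx⟩))
  have hf := List.mem_filter.mp (hfw ▸ List.mem_cons_self : f ∈ L.filter p)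
  refine ⟨f, hf.1, hf.2, ?_⟩
  rw [mk_append, hsep, ← mk_append, hfw, List.append_assoc, List.cons_append]
  refine isMinimal_mk_iff.mpr ⟨_, _, rfl, fun y hy => ?_⟩
  rw [List.mem_filter] at hy
  exact fun hc => hp f hf.1 y hy.1 hf.2 (by simpa using hy.2) hc.symm

/-! ### Translations and extreme endpoints -/

def shift (t : ℤ) : Heap → Heap := Quot.map (List.map (Polymer.shift t)) fun _ _ => .map_shift t

theorem shift_mk (t : ℤ) (L : List Polymer) : ⟦L⟧ₕ.shift t = ⟦L.map (Polymer.shift t)⟧ₕ := rfl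

@[simp] theorem shift_shift : (H.shift s).shift t = H.shift (s + t) := by
  induction H; simp [shift_mk, Function.comp_def]

@[simp] theorem shift_zero : H.shift 0 = H := by
  induction H; exact congrArg _ (List.map_id'' (fun _ => Polymer.shift_zero) _)

theorem shift_mul : (H₁ * H₂).shift t = H₁.shift t * H₂.shift t := by
  induction H₁; induction H₂; simp [← mk_append, shift_mk]

@[simp] theorem toMultiset_shift : (H.shift t).toMultiset = H.toMultiset.map (Polymer.shift t) := by
  induction H; rfl

theorem toMultiset_shift_ne_zero (hH : H.toMultiset ≠ 0) : (H.shift t).toMultiset ≠ 0 := by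
  simpa using hH

@[simp] theorem totalLength_shift : (H.shift t).totalLength = H.totalLength := by
  simp [totalLength, Multiset.map_map]

theorem IsMinimal.shift (h : H.IsMinimal a) (t : ℤ) : (H.shift t).IsMinimal (a.shift t) := by
  obtain ⟨T, rfl⟩ := h
  exact ⟨T.map (Polymer.shift t), rfl⟩

theorem isMinimal_shift_iff : (H.shift t).IsMinimal (a.shift t) ↔ H.IsMinimal a :=
  ⟨fun h => by simpa using h.shift (-t), fun h => h.shift t⟩

theorem IsPyramid.shift (h : H.IsPyramid) (t : ℤ) : (H.shift t).IsPyramid := by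
  obtain ⟨a, ha, huniq⟩ := h
  refine ⟨a.shift t, ha.shift t, fun b hb => ?_⟩
  have hb' : H.IsMinimal (b.shift (-t)) := (isMinimal_shift_iff (t := t)).mp (by simpa using hb)
  simpa using congrArg (Polymer.shift t) (huniq _ hb')

theorem isPyramid_shift_iff : (H.shift t).IsPyramid ↔ H.IsPyramid :=
  ⟨fun h => by simpa using h.shift (-t), fun h => h.shift t⟩

theorem space_eq (H : Heap) : H.space = ⋃ p ∈ H.toMultiset, p.interval := rfl

theorem space_shift : (H.shift t).space = (· + (t : ℝ)) '' H.space := by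
  simp only [space_eq, Set.image_iUnion₂, ← Polymer.interval_shift, toMultiset_shift]
  ext z
  simp

theorem IsConnected.shift (h : H.IsConnected) (t : ℤ) : (H.shift t).IsConnected := by
  refine ⟨toMultiset_shift_ne_zero h.1, ?_⟩
  rw [space_shift, ← isPreconnected_iff_ordConnected]
  exact (isPreconnected_iff_ordConnected.mpr h.2).image _ (continuous_add_const _).continuousOn

def lefts (H : Heap) : Set ℤ := Polymer.left '' {p | p ∈ H.toMultiset}

def rights (H : Heap) : Set ℤ := Polymer.right '' {p | p ∈ H.toMultiset}

def minLeft (H : Heap) : ℤ := sInf H.lefts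

def maxRight (H : Heap) : ℤ := sSup H.rights

def normalize (H : Heap) : Heap := H.shift (-H.minLeft)

theorem isLeast_lefts_iff :
    IsLeast H.lefts r ↔ (∀ p ∈ H.toMultiset, r ≤ p.left) ∧ ∃ p ∈ H.toMultiset, p.left = r := by
  simp [IsLeast, lefts, lowerBounds, and_comm]

theorem normalized_iff_isLeast : H.Normalized ↔ IsLeast H.lefts 0 :=
  isLeast_lefts_iff.symm

theorem isLeast_minLeft (hH : H.toMultiset ≠ 0) : IsLeast H.lefts H.minLeft := by
  have hfin : H.lefts.Finite := H.toMultiset.finite_toSet.image _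
  obtain ⟨p, hp⟩ := Multiset.exists_mem_of_ne_zero hH
  exact ⟨Set.Nonempty.csInf_mem ⟨p.left, p, hp, rfl⟩ hfin, fun _ h => csInf_le hfin.bddBelow h⟩

theorem isGreatest_maxRight (hH : H.toMultiset ≠ 0) : IsGreatest H.rights H.maxRight := by
  have hfin : H.rights.Finite := H.toMultiset.finite_toSet.image _
  obtain ⟨p, hp⟩ := Multiset.exists_mem_of_ne_zero hH
  exact ⟨Set.Nonempty.csSup_mem ⟨p.right, p, hp, rfl⟩ hfin, fun _ h => le_csSup hfin.bddAbove h⟩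

theorem lefts_shift : (H.shift t).lefts = (· + t) '' H.lefts := by
  ext
  simp only [lefts, toMultiset_shift, Set.mem_image, Set.mem_ofPred_eq, Multiset.mem_map]
  constructor
  · rintro ⟨_, ⟨p, hp, rfl⟩, rfl⟩; exact ⟨p.left, ⟨p, hp, rfl⟩, rfl⟩
  · rintro ⟨_, ⟨p, hp, rfl⟩, rfl⟩; exact ⟨p.shift t, ⟨p, hp, rfl⟩, rfl⟩

theorem rights_shift : (H.shift t).rights = (· + t) '' H.rights := by
  ext
  simp only [rights, toMultiset_shift, Set.mem_image, Set.mem_ofPred_eq, Multiset.mem_map]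
  constructor
  · rintro ⟨_, ⟨p, hp, rfl⟩, rfl⟩; exact ⟨p.right, ⟨p, hp, rfl⟩, rfl⟩
  · rintro ⟨_, ⟨p, hp, rfl⟩, rfl⟩; exact ⟨p.shift t, ⟨p, hp, rfl⟩, rfl⟩

theorem minLeft_shift (hH : H.toMultiset ≠ 0) : (H.shift t).minLeft = H.minLeft + t :=
  (isLeast_minLeft (toMultiset_shift_ne_zero hH)).unique <| by
    rw [lefts_shift]
    exact add_left_mono.map_isLeast (isLeast_minLeft hH)

theorem maxRight_shift (hH : H.toMultiset ≠ 0) : (H.shift t).maxRight = H.maxRight + t :=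
  (isGreatest_maxRight (toMultiset_shift_ne_zero hH)).unique <| by
    rw [rights_shift]
    exact add_left_mono.map_isGreatest (isGreatest_maxRight hH)

theorem normalize_shift (hH : H.toMultiset ≠ 0) : (H.shift t).normalize = H.normalize := by
  rw [normalize, normalize, minLeft_shift hH, shift_shift]
  congr 1; ring

theorem Normalized.normalize_eq (h : H.Normalized) : H.normalize = H := by
  obtain ⟨p, hp, -⟩ := h.2
  rw [normalize, (isLeast_minLeft (ne_of_mem_of_not_mem' hp (Multiset.notMem_zero p))).unique
    (normalized_iff_isLeast.mp h), neg_zero, shift_zero]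

theorem normalized_normalize (hH : H.toMultiset ≠ 0) : H.normalize.Normalized := by
  rw [normalized_iff_isLeast, normalize, lefts_shift]
  have := (add_left_mono (a := -H.minLeft)).map_isLeast (isLeast_minLeft hH)
  rwa [add_neg_cancel] at this

theorem eq_shift_of_normalize_eq {H H' : Heap} (h : H.normalize = H'.normalize) :
    H = H'.shift (-H'.minLeft + H.minLeft) := by
  rw [← shift_shift, ← normalize, ← h, normalize, shift_shift, neg_add_cancel,
    shift_zero]

end Heap

/-! ### Pushing a polymer -/

/-- Pushing `S`: the first component is the part of the word that falls into the pyramid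
over `S`, the second the rest. -/
def pyramidSplit : Set Polymer → List Polymer → List Polymer × List Polymer
  | _, [] => ([], [])
  | S, x :: t =>
    if ∃ c ∈ S, c.Concurrent x then
      ((x :: (pyramidSplit (insert x S) t).1), (pyramidSplit (insert x S) t).2)
    else
      ((pyramidSplit S t).1, x :: (pyramidSplit S t).2)

open Heap

variable {S : Set Polymer} {α c : Polymer} {R P : List Polymer}

theorem pyramidSplit_cons_of_concurrent (h : ∃ c ∈ S, c.Concurrent x) (t : List Polymer) :
    pyramidSplit S (x :: t) =
      (x :: (pyramidSplit (insert x S) t).1, (pyramidSplit (insert x S) t).2) := by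
  rw [pyramidSplit, if_pos h]

theorem pyramidSplit_cons_of_not_concurrent (h : ¬∃ c ∈ S, c.Concurrent x) (t : List Polymer) :
    pyramidSplit S (x :: t) = ((pyramidSplit S t).1, x :: (pyramidSplit S t).2) := by
  rw [pyramidSplit, if_neg h]

theorem not_concurrent_of_mem_pyramidSplit_snd (hx : x ∈ (pyramidSplit S L).2) (hc : c ∈ S) :
    ¬c.Concurrent x := by
  induction L generalizing S with
  | nil => simp [pyramidSplit] at hx
  | cons y t ih =>
    by_cases hy : ∃ c ∈ S, c.Concurrent y
    · rw [pyramidSplit_cons_of_concurrent hy] at hx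
      exact ih hx (Set.mem_insert_of_mem _ hc)
    · rw [pyramidSplit_cons_of_not_concurrent hy] at hx
      rcases List.mem_cons.mp hx with rfl | hx
      exacts [fun h => hy ⟨c, hc, h⟩, ih hx hc]

theorem mk_eq_pyramidSplit (S : Set Polymer) (L : List Polymer) :
    ⟦L⟧ₕ = ⟦(pyramidSplit S L).2 ++ (pyramidSplit S L).1⟧ₕ := by
  induction L generalizing S with
  | nil => rfl
  | cons x t ih =>
    by_cases hx : ∃ c ∈ S, c.Concurrent x
    · rw [pyramidSplit_cons_of_concurrent hx, mk_cons_congr x (ih _), mk_append_cons]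
      exact fun y hy hyx =>
        not_concurrent_of_mem_pyramidSplit_snd hy (Set.mem_insert x S) hyx.symm
    · rw [pyramidSplit_cons_of_not_concurrent hx]
      exact mk_cons_congr x (ih S)

theorem exists_concurrent_of_pyramidSplit_fst (h : (pyramidSplit S L).1 = u ++ b :: v) :
    ∃ c, (c ∈ S ∨ c ∈ u) ∧ c.Concurrent b := by
  induction L generalizing S u with
  | nil => simp [pyramidSplit] at h
  | cons x t ih =>
    by_cases hx : ∃ c ∈ S, c.Concurrent x
    · rw [pyramidSplit_cons_of_concurrent hx] at h
      rcases u with _ | ⟨z, u⟩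
      · obtain ⟨rfl, -⟩ := List.cons.inj h
        obtain ⟨c, hc, hcx⟩ := hx
        exact ⟨c, .inl hc, hcx⟩
      · obtain ⟨rfl, h'⟩ := List.cons.inj (h.trans (List.cons_append ..))
        obtain ⟨c, hc | hc, hcb⟩ := ih h'
        · rcases Set.mem_insert_iff.mp hc with rfl | hc
          exacts [⟨c, .inr (.head _), hcb⟩, ⟨c, .inl hc, hcb⟩]
        · exact ⟨c, .inr (.tail _ hc), hcb⟩
    · rw [pyramidSplit_cons_of_not_concurrent hx] at h
      exact ih h

theorem isPyramid_cons_pyramidSplit_fst (α : Polymer) (L : List Polymer) :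
    (⟦α :: (pyramidSplit {α} L).1⟧ₕ).IsPyramid := by
  refine ⟨α, ⟨_, rfl⟩, fun b hb => ?_⟩
  obtain ⟨_ | ⟨z, u⟩, v, huv, hu⟩ := isMinimal_mk_iff.mp hb
  · exact (List.cons.inj huv).1.symm
  · obtain ⟨rfl, huv'⟩ := List.cons.inj (huv.trans (List.cons_append ..))
    obtain ⟨c, hc | hc, hcb⟩ := exists_concurrent_of_pyramidSplit_fst huv'
    · exact absurd (Set.mem_singleton_iff.mp hc ▸ hcb) (hu _ (.head _))
    · exact absurd hcb (hu c (.tail _ hc))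

theorem pyramidSplit_snd_eq_nil (h : (⟦α :: L⟧ₕ).IsPyramid) : (pyramidSplit {α} L).2 = [] := by
  rcases hR : (pyramidSplit {α} L).2 with _ | ⟨b, w⟩
  · rfl
  have hbR : b ∈ (pyramidSplit {α} L).2 := hR ▸ List.mem_cons_self
  have hαb : ¬α.Concurrent b := not_concurrent_of_mem_pyramidSplit_snd hbR rfl
  have hb : (⟦α :: L⟧ₕ).IsMinimal b := by
    refine isMinimal_iff.mpr ⟨w ++ α :: (pyramidSplit {α} L).1, ?_⟩
    rw [mk_cons_congr α (mk_eq_pyramidSplit {α} L), hR]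
    refine (mk_append_cons (u := b :: w) (fun y hy hyα => ?_) _).symm
    exact not_concurrent_of_mem_pyramidSplit_snd (hR ▸ hy) (Set.mem_singleton α) hyα.symm
  obtain ⟨m, -, huniq⟩ := h
  exact absurd ((huniq α ⟨L, rfl⟩).trans (huniq b hb).symm ▸ Polymer.concurrent_refl b) hαb

theorem pyramidSplit_fst_eq_self (h : (pyramidSplit S L).2 = []) : (pyramidSplit S L).1 = L := by
  induction L generalizing S with
  | nil => rfl
  | cons x t ih =>
    by_cases hx : ∃ c ∈ S, c.Concurrent x
    · rw [pyramidSplit_cons_of_concurrent hx] at h ⊢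
      rw [ih h]
    · simp [pyramidSplit_cons_of_not_concurrent hx] at h

theorem pyramidSplit_append_of_not_concurrent (hu : ∀ x ∈ u, ∀ c ∈ S, ¬c.Concurrent x)
    (v : List Polymer) :
    pyramidSplit S (u ++ v) = ((pyramidSplit S v).1, u ++ (pyramidSplit S v).2) := by
  induction u with
  | nil => rfl
  | cons x u ih =>
    rw [List.cons_append, pyramidSplit_cons_of_not_concurrent
      (fun ⟨c, hc, hcx⟩ => hu x (.head _) c hc hcx), ih fun y hy => hu y (.tail _ hy)]
    rfl

theorem exists_concurrent_insert_iff (hxy : ¬x.Concurrent b) :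
    (∃ c ∈ insert x S, c.Concurrent b) ↔ ∃ c ∈ S, c.Concurrent b := by
  refine ⟨fun ⟨c, hc, hcb⟩ => ?_, fun ⟨c, hc, hcb⟩ => ⟨c, Set.mem_insert_of_mem _ hc, hcb⟩⟩
  rcases Set.mem_insert_iff.mp hc with rfl | hc
  exacts [absurd hcb hxy, ⟨c, hc, hcb⟩]

theorem pyramidSplit_congr_of_heapStep (S : Set Polymer) (h : HeapStep L L') :
    ⟦(pyramidSplit S L).1⟧ₕ = ⟦(pyramidSplit S L').1⟧ₕ ∧
      ⟦(pyramidSplit S L).2⟧ₕ = ⟦(pyramidSplit S L').2⟧ₕ := by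
  obtain ⟨l₁, l₂, x, y, hxy, rfl, rfl⟩ := h
  have hyx : ¬y.Concurrent x := fun h => hxy h.symm
  induction l₁ generalizing S with
  | nil =>
    by_cases hx : ∃ c ∈ S, c.Concurrent x <;> by_cases hy : ∃ c ∈ S, c.Concurrent y
    · rw [List.nil_append, List.nil_append, pyramidSplit_cons_of_concurrent hx,
        pyramidSplit_cons_of_concurrent ((exists_concurrent_insert_iff hxy).mpr hy),
        pyramidSplit_cons_of_concurrent hy,
        pyramidSplit_cons_of_concurrent ((exists_concurrent_insert_iff hyx).mpr hx),
        Set.insert_comm]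
      exact ⟨mk_cons_cons_swap hxy _, rfl⟩
    · rw [List.nil_append, List.nil_append, pyramidSplit_cons_of_concurrent hx,
        pyramidSplit_cons_of_not_concurrent (mt (exists_concurrent_insert_iff hxy).mp hy),
        pyramidSplit_cons_of_not_concurrent hy, pyramidSplit_cons_of_concurrent hx]
      exact ⟨rfl, rfl⟩
    · rw [List.nil_append, List.nil_append, pyramidSplit_cons_of_not_concurrent hx,
        pyramidSplit_cons_of_concurrent hy, pyramidSplit_cons_of_concurrent hy,
        pyramidSplit_cons_of_not_concurrent (mt (exists_concurrent_insert_iff hyx).mp hx)]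
      exact ⟨rfl, rfl⟩
    · rw [List.nil_append, List.nil_append, pyramidSplit_cons_of_not_concurrent hx,
        pyramidSplit_cons_of_not_concurrent hy, pyramidSplit_cons_of_not_concurrent hy,
        pyramidSplit_cons_of_not_concurrent hx]
      exact ⟨rfl, mk_cons_cons_swap hxy _⟩
  | cons z l₁ ih =>
    by_cases hz : ∃ c ∈ S, c.Concurrent z
    · rw [List.cons_append, List.cons_append, pyramidSplit_cons_of_concurrent hz,
        pyramidSplit_cons_of_concurrent hz]
      exact ⟨mk_cons_congr z (ih _).1, (ih _).2⟩
    · rw [List.cons_append, List.cons_append, pyramidSplit_cons_of_not_concurrent hz,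
        pyramidSplit_cons_of_not_concurrent hz]
      exact ⟨(ih _).1, mk_cons_congr z (ih _).2⟩

theorem pyramidSplit_congr (S : Set Polymer) (h : ⟦L⟧ₕ = ⟦L'⟧ₕ) :
    ⟦(pyramidSplit S L).1⟧ₕ = ⟦(pyramidSplit S L').1⟧ₕ ∧
      ⟦(pyramidSplit S L).2⟧ₕ = ⟦(pyramidSplit S L').2⟧ₕ :=
  Prod.ext_iff.mp <| congrArg
    (Quot.lift (fun L => (⟦(pyramidSplit S L).1⟧ₕ, ⟦(pyramidSplit S L).2⟧ₕ))
      fun _ _ h => Prod.ext_iff.mpr (pyramidSplit_congr_of_heapStep S h)) h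

theorem exists_mk_cons_eq_append_pyramid (α : Polymer) (T : List Polymer) :
    ∃ R P, ⟦α :: T⟧ₕ = ⟦R ++ α :: P⟧ₕ ∧ (∀ x ∈ R, ¬α.Concurrent x) ∧ (⟦α :: P⟧ₕ).IsPyramid := by
  refine ⟨(pyramidSplit {α} T).2, (pyramidSplit {α} T).1, ?_,
    fun x hx => not_concurrent_of_mem_pyramidSplit_snd hx (Set.mem_singleton α),
    isPyramid_cons_pyramidSplit_fst α T⟩
  rw [mk_cons_congr α (mk_eq_pyramidSplit {α} T), mk_append_cons]
  exact fun y hy hyα => not_concurrent_of_mem_pyramidSplit_snd hy (Set.mem_singleton α) hyα.symm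

theorem pyramidSplit_append_of_isPyramid (hR : ∀ x ∈ R, ¬α.Concurrent x)
    (hP : (⟦α :: P⟧ₕ).IsPyramid) : pyramidSplit {α} (R ++ P) = (P, R) := by
  rw [pyramidSplit_append_of_not_concurrent fun x hx c hc => Set.mem_singleton_iff.mp hc ▸ hR x hx,
    pyramidSplit_snd_eq_nil hP, pyramidSplit_fst_eq_self (pyramidSplit_snd_eq_nil hP),
    List.append_nil]

theorem mk_eq_mk_of_append_pyramid {R' P' : List Polymer} (hR : ∀ x ∈ R, ¬α.Concurrent x)
    (hP : (⟦α :: P⟧ₕ).IsPyramid) (hR' : ∀ x ∈ R', ¬α.Concurrent x) (hP' : (⟦α :: P'⟧ₕ).IsPyramid)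
    (h : ⟦R ++ P⟧ₕ = ⟦R' ++ P'⟧ₕ) : ⟦R⟧ₕ = ⟦R'⟧ₕ ∧ ⟦P⟧ₕ = ⟦P'⟧ₕ := by
  have := pyramidSplit_congr {α} h
  rw [pyramidSplit_append_of_isPyramid hR hP, pyramidSplit_append_of_isPyramid hR' hP'] at this
  exact this.symm

/-! ### Connectivity -/

def Reach (M : Multiset Polymer) : Polymer → Polymer → Prop :=
  Relation.ReflTransGen fun a b => a ∈ M ∧ b ∈ M ∧ a.Concurrent b

namespace Reach

variable {M M' : Multiset Polymer} {c : Polymer}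

theorem mem (h : Reach M a b) (ha : a ∈ M) : b ∈ M := by
  induction h with
  | refl => exact ha
  | tail _ hbc _ => exact hbc.2.1

theorem mono (hM : ∀ p ∈ M, p ∈ M') (h : Reach M a b) : Reach M' a b := by
  induction h with
  | refl => exact .refl
  | tail _ hbc ih => exact ih.tail ⟨hM _ hbc.1, hM _ hbc.2.1, hbc.2.2⟩

theorem tail_concurrent (h : Reach M a b) (hb : b ∈ M) (hc : c ∈ M) (hbc : b.Concurrent c) :
    Reach M a c :=
  Relation.ReflTransGen.tail h ⟨hb, hc, hbc⟩

end Reach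

variable {M : Multiset Polymer}

theorem isPreconnected_reach (M : Multiset Polymer) (m : Polymer) :
    IsPreconnected (⋃ p ∈ {p | Reach M m p}, p.interval) := by
  let R := fun i j : Polymer => (i.interval ∩ j.interval).Nonempty ∧ i ∈ {p | Reach M m p}
  have key : ∀ i, Reach M m i → Relation.ReflTransGen R i m ∧ Relation.ReflTransGen R m i := by
    intro i hi
    induction hi with
    | refl => exact ⟨.refl, .refl⟩
    | @tail b c hmb hbc ih =>
      refine ⟨.head ⟨hbc.2.2.symm.inter_nonempty, hmb.tail hbc⟩ ih.1,
        ih.2.tail ⟨hbc.2.2.inter_nonempty, hmb⟩⟩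
  exact IsPreconnected.biUnion_of_reflTransGen (fun _ _ => isPreconnected_Icc)
    fun i hi j hj => (key i hi).1.trans (key j hj).2

theorem reach_of_isPreconnected (h : IsPreconnected (⋃ p ∈ M, p.interval)) (ha : a ∈ M)
    (hb : b ∈ M) : Reach M a b := by
  by_contra hab
  have hfin : ∀ P : Polymer → Prop, {p | p ∈ M ∧ P p}.Finite := fun P =>
    M.finite_toSet.subset fun _ hp => hp.1
  obtain ⟨z, -, hzt, hzt'⟩ := isPreconnected_closed_iff.mp h
    (⋃ p ∈ {p | p ∈ M ∧ Reach M a p}, p.interval) (⋃ p ∈ {p | p ∈ M ∧ ¬Reach M a p}, p.interval)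
    ((hfin _).isClosed_biUnion fun _ _ => isClosed_Icc)
    ((hfin _).isClosed_biUnion fun _ _ => isClosed_Icc)
    (fun z hz => by
      obtain ⟨p, hp, hzp⟩ := Set.mem_iUnion₂.mp hz
      by_cases hap : Reach M a p
      exacts [.inl (Set.mem_biUnion ⟨hp, hap⟩ hzp), .inr (Set.mem_biUnion ⟨hp, hap⟩ hzp)])
    ⟨a.left, Set.mem_biUnion ha a.left_mem_interval,
      Set.mem_biUnion ⟨ha, .refl⟩ a.left_mem_interval⟩
    ⟨b.left, Set.mem_biUnion hb b.left_mem_interval, Set.mem_biUnion ⟨hb, hab⟩ b.left_mem_interval⟩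
  obtain ⟨p, ⟨hpM, hap⟩, hzp⟩ := Set.mem_iUnion₂.mp hzt
  obtain ⟨q, ⟨hqM, haq⟩, hzq⟩ := Set.mem_iUnion₂.mp hzt'
  exact haq (hap.tail_concurrent hpM hqM (Polymer.concurrent_of_mem_interval hzp hzq))

theorem reach_separated (L : List Polymer) (m : Polymer) :
    ∀ x ∈ L, ∀ y ∈ L, decide (Reach L m x) → ¬decide (Reach L m y) → ¬x.Concurrent y :=
  fun _ hx _ hy hmx hmy hxy => hmy <| decide_eq_true <| (of_decide_eq_true hmx).tail_concurrent
    (Multiset.mem_coe.mpr hx) (Multiset.mem_coe.mpr hy) hxy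

namespace Heap

variable {H : Heap}

theorem mem_space_mk {z : ℝ} : z ∈ ⟦L⟧ₕ.space ↔ ∃ p ∈ L, z ∈ p.interval := by
  simp [space_eq, toMultiset_mk]

theorem space_mk_append (u v : List Polymer) : ⟦u ++ v⟧ₕ.space = ⟦u⟧ₕ.space ∪ ⟦v⟧ₕ.space := by
  ext z
  simp only [mem_space_mk, List.mem_append, Set.mem_union, or_and_right, exists_or]

/-- `K` is the connected component of the leftmost polymer of `L`. -/
theorem exists_mk_eq_component_append (hL : L ≠ []) :
    ∃ K R r, ⟦L⟧ₕ = ⟦K ++ R⟧ₕ ∧ (⟦K⟧ₕ).IsConnected ∧ IsGreatest (⟦K⟧ₕ).rights r ∧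
      ∀ y ∈ R, r < y.left := by
  obtain ⟨m, hmL, hmin⟩ := Multiset.exists_min_image Polymer.left (mt toMultiset_mk_eq_zero.mp hL)
  rw [toMultiset_mk, Multiset.mem_coe] at hmL
  let p : Polymer → Bool := fun x => Reach L m x
  have hK : ∀ x, x ∈ L.filter p ↔ Reach L m x := fun x => by
    simpa [p, List.mem_filter] using fun h : Reach L m x => h.mem (Multiset.mem_coe.mpr hmL)
  have hspace : ⟦L.filter p⟧ₕ.space = ⋃ x ∈ {x | Reach L m x}, x.interval := by
    ext z
    simp [mem_space_mk, hK]
  have hne : (⟦L.filter p⟧ₕ).toMultiset ≠ 0 :=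
    mt toMultiset_mk_eq_zero.mp (List.ne_nil_of_mem ((hK m).mpr .refl))
  have hconn : (⟦L.filter p⟧ₕ).space.OrdConnected :=
    hspace ▸ (isPreconnected_reach _ _).ordConnected
  refine ⟨L.filter p, L.filter (!p ·), _, mk_eq_filter_append_filter p (reach_separated L m),
    ⟨hne, hconn⟩, isGreatest_maxRight hne, fun y hy => ?_⟩
  obtain ⟨hyL, hyp⟩ := List.mem_filter.mp hy
  obtain ⟨x₀, hx₀, hx₀r⟩ := (isGreatest_maxRight hne).1
  by_contra! hle
  obtain ⟨c, hc, hyc⟩ := mem_space_mk.mp <| hconn.out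
    (mem_space_mk.mpr ⟨m, (hK m).mpr .refl, m.left_mem_interval⟩)
    (mem_space_mk.mpr ⟨x₀, Multiset.mem_coe.mp hx₀, x₀.right_mem_interval⟩)
    (⟨by exact_mod_cast hmin y (Multiset.mem_coe.mpr hyL), by exact_mod_cast hx₀r ▸ hle⟩ :
      (y.left : ℝ) ∈ Set.Icc _ _)
  exact (by simpa [p] using hyp : ¬Reach L m y) <| ((hK c).mp hc).tail_concurrent
    (List.mem_filter.mp hc).1 hyL (Polymer.concurrent_of_mem_interval hyc y.left_mem_interval)

/-- An uncovered point between two polymers of a heap would separate it into two parts, each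
containing a minimal polymer. -/
theorem IsPyramid.ordConnected_space (h : H.IsPyramid) : H.space.OrdConnected := by
  induction H with | mk L => ?_
  refine ⟨fun x hx y hy z hz => ?_⟩
  by_contra hzL
  have hside : ∀ p ∈ L, (p.right : ℝ) < z ∨ z < p.left := fun p hp => by
    by_contra! hpz
    exact hzL (mem_space_mk.mpr ⟨p, hp, hpz.2, hpz.1⟩)
  let q : Polymer → Bool := fun p => (p.right : ℝ) < z
  have hsep : ∀ p ∈ L, ∀ p' ∈ L, q p → ¬q p' → ¬p.Concurrent p' := by
    intro p hp p' hp' hpq hpq' hc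
    have h1 : (p.right : ℝ) < z := of_decide_eq_true hpq
    have h2 : z < p'.left := (hside p' hp').resolve_left (by simpa [q] using hpq')
    have : (p'.left : ℝ) ≤ p.right := by exact_mod_cast hc.2
    linarith
  obtain ⟨p, hp, hxp⟩ := mem_space_mk.mp hx
  obtain ⟨p', hp', hyp'⟩ := mem_space_mk.mp hy
  have hqp : q p := decide_eq_true <| (hside p hp).resolve_right fun h' => by
    linarith [hxp.1, hz.1]
  have hqp' : ¬q p' := fun h' => by
    have : (p'.right : ℝ) < z := of_decide_eq_true h'
    linarith [hyp'.2, hz.2]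
  obtain ⟨f, -, hf, hfmin⟩ := exists_isMinimal_of_separated q hsep ⟨p, hp, hqp⟩ []
  obtain ⟨g, -, hg, hgmin⟩ := exists_isMinimal_of_separated (!q ·)
    (fun a ha b hb ha' hb' hab => hsep b hb a ha (by simpa using hb') (by simpa using ha') hab.symm)
    ⟨p', hp', by simpa using hqp'⟩ []
  rw [List.append_nil] at hfmin hgmin
  obtain ⟨_, _, huniq⟩ := h
  obtain rfl : f = g := (huniq f hfmin).trans (huniq g hgmin).symm
  simp [hf] at hg

theorem right_lt_left_of_isRightmostMinimal (hα : (⟦R ++ α :: P⟧ₕ).IsRightmostMinimal α)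
    (hR : ∀ x ∈ R, ¬α.Concurrent x) (hx : x ∈ R) : x.right < α.left := by
  by_contra! hxα
  have hαx : α.right < x.left :=
    (Polymer.not_concurrent_iff.mp (hR x hx)).resolve_left hxα.not_gt
  obtain ⟨f, hfR, hxf, hfmin⟩ := exists_isMinimal_of_separated _ (reach_separated R x)
    ⟨x, hx, decide_eq_true .refl⟩ (α :: P)
  have hfα : f.right < α.left := (Polymer.not_concurrent_iff.mp (hR f hfR)).resolve_right
    fun h => (hα.2 f hfmin).not_gt (α.left_lt_right.trans h)
  obtain ⟨c, hxc, hαc⟩ := Set.mem_iUnion₂.mp <| (isPreconnected_reach R x).ordConnected.out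
    (Set.mem_biUnion (of_decide_eq_true hxf) f.right_mem_interval)
    (Set.mem_biUnion (Relation.ReflTransGen.refl : Reach R x x) x.left_mem_interval)
    (⟨by exact_mod_cast hfα.le, by exact_mod_cast (α.left_lt_right.trans hαx).le⟩ :
      (α.left : ℝ) ∈ Set.Icc _ _)
  exact hR c (Multiset.mem_coe.mp (hxc.mem (Multiset.mem_coe.mpr hx)))
    (Polymer.concurrent_of_mem_interval α.left_mem_interval hαc)

theorem exists_mem_left_le_lt_right (hL : (⟦L⟧ₕ).space.OrdConnected) {e f : ℤ} (hef : e < f)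
    (he : (e : ℝ) ∈ (⟦L⟧ₕ).space) (hf : (f : ℝ) ∈ (⟦L⟧ₕ).space) :
    ∃ p ∈ L, p.left ≤ e ∧ e < p.right := by
  have hef' : (e : ℝ) + 1 ≤ f := by exact_mod_cast hef
  obtain ⟨p, hp, hpl, hpr⟩ := mem_space_mk.mp <| hL.out he hf
    (⟨by linarith, by linarith⟩ : (e : ℝ) + 1 / 2 ∈ Set.Icc _ _)
  refine ⟨p, hp, ?_, ?_⟩
  · by_contra! h
    have : (e : ℝ) + 1 ≤ p.left := by exact_mod_cast h
    linarith
  · by_contra! h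
    have : (p.right : ℝ) ≤ e := by exact_mod_cast h
    linarith

end Heap

/-! ### Nordic forms -/

/-- A word `first · middle · base · top` in the shape produced by the Nordic decomposition:
`⟦first⟧ₕ` is the component `C₁`, with right end `edge`; `⟦middle⟧ₕ` is `H`, lying strictly
between `edge` and the left end of `base`; and `⟦base :: top⟧ₕ` is the pyramid `P` of the
polymer `base = α`, which reaches down to the column of `edge`. -/
structure NordicForm where
  first : List Polymer
  middle : List Polymer
  base : Polymer
  top : List Polymer
  edge : ℤ
  isConnected_first : (⟦first⟧ₕ).IsConnected
  isGreatest_edge : IsGreatest (⟦first⟧ₕ).rights edge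
  middle_between : ∀ x ∈ middle, edge < x.left ∧ x.right < base.left
  edge_lt : edge < base.left
  isPyramid : (⟦base :: top⟧ₕ).IsPyramid
  reaches : ∃ p ∈ base :: top, p.left ≤ edge

namespace NordicForm

variable (D : NordicForm) {m y : Polymer}

def word : List Polymer := D.first ++ D.middle ++ D.base :: D.top

def quad : Heap × ℕ × Heap × Heap :=
  ((⟦D.first⟧ₕ).normalize, (D.base.left - (D.edge + 1)).toNat,
    (⟦D.middle⟧ₕ).shift (-(D.edge + 1)), (⟦D.base :: D.top⟧ₕ).shift (-D.base.left))

theorem right_le_edge (hx : x ∈ D.first) : x.right ≤ D.edge :=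
  D.isGreatest_edge.2 ⟨x, mem_toMultiset_mk.mpr hx, rfl⟩

theorem first_ne_nil : D.first ≠ [] :=
  mt toMultiset_mk_eq_zero.mpr D.isConnected_first.1

theorem not_mem_first_of_mem_middle (hy : y ∈ D.middle) : y ∉ D.first := fun hy' => by
  have := D.right_le_edge hy'
  have := (D.middle_between y hy).1
  have := y.left_lt_right
  omega

theorem right_lt_base (hx : x ∈ D.first ++ D.middle) : x.right < D.base.left := by
  rcases List.mem_append.mp hx with hx | hx
  · exact (D.right_le_edge hx).trans_lt D.edge_lt
  · exact (D.middle_between x hx).2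

theorem not_concurrent_base (hx : x ∈ D.first ++ D.middle) : ¬D.base.Concurrent x :=
  fun h => (D.right_lt_base hx).not_ge h.1

theorem mk_word : ⟦D.word⟧ₕ = ⟦D.base :: (D.first ++ D.middle ++ D.top)⟧ₕ := by
  rw [word, List.append_assoc, ← mk_append_cons fun y hy h => D.not_concurrent_base hy h.symm,
    List.append_assoc]

theorem isRightmostMinimal_base : (⟦D.word⟧ₕ).IsRightmostMinimal D.base := by
  refine ⟨isMinimal_iff.mpr ⟨_, D.mk_word⟩, fun b hb => ?_⟩
  by_cases hbR : b ∈ D.first ++ D.middle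
  · exact b.left_lt_right.le.trans (D.right_lt_base hbR).le
  · obtain ⟨a, -, huniq⟩ := D.isPyramid
    have hb := IsMinimal.of_mk_append (by rwa [word, List.append_assoc] at hb) hbR
    rw [(huniq b hb).trans (huniq D.base ⟨D.top, rfl⟩).symm]

theorem not_isPyramid : ¬(⟦D.word⟧ₕ).IsPyramid := by
  obtain ⟨x, w, hx⟩ := List.exists_cons_of_ne_nil D.first_ne_nil
  have hxmin : (⟦D.word⟧ₕ).IsMinimal x := isMinimal_iff.mpr ⟨w ++ D.middle ++ D.base :: D.top,
    by rw [word, hx]; rfl⟩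
  rintro ⟨a, -, huniq⟩
  have hxb : x = D.base := (huniq x hxmin).trans (huniq _ D.isRightmostMinimal_base.1).symm
  exact D.not_concurrent_base (List.mem_append_left _ (hx ▸ List.mem_cons_self))
    (hxb ▸ Polymer.concurrent_refl x)

theorem isConnected_word : (⟦D.word⟧ₕ).IsConnected := by
  refine ⟨mt toMultiset_mk_eq_zero.mp (by simp [word]), ?_⟩
  have hP := D.isPyramid.ordConnected_space
  obtain ⟨p, hp, hpe⟩ := D.reaches
  have hIcc : Set.Icc (p.left : ℝ) D.base.left ⊆ ⟦D.base :: D.top⟧ₕ.space :=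
    hP.out (mem_space_mk.mpr ⟨p, hp, p.left_mem_interval⟩)
      (mem_space_mk.mpr ⟨D.base, .head _, D.base.left_mem_interval⟩)
  have hmiddle : ⟦D.middle⟧ₕ.space ⊆ ⟦D.base :: D.top⟧ₕ.space := fun z hz => by
    obtain ⟨y, hy, hyz⟩ := mem_space_mk.mp hz
    obtain ⟨h1, h2⟩ := D.middle_between y hy
    refine hIcc ⟨le_trans ?_ hyz.1, hyz.2.trans ?_⟩ <;> exact_mod_cast (by omega)
  obtain ⟨x₀, hx₀, hx₀e⟩ := D.isGreatest_edge.1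
  rw [word, space_mk_append, space_mk_append, Set.union_assoc,
    Set.union_eq_self_of_subset_left hmiddle, ← isPreconnected_iff_ordConnected]
  refine IsPreconnected.union (D.edge : ℝ) (mem_space_mk.mpr ⟨x₀, mem_toMultiset_mk.mp hx₀,
    hx₀e ▸ x₀.right_mem_interval⟩) (hIcc ⟨by exact_mod_cast hpe, by exact_mod_cast D.edge_lt.le⟩)
    (isPreconnected_iff_ordConnected.mpr D.isConnected_first.2)
    (isPreconnected_iff_ordConnected.mpr hP)

theorem mem_first_of_reach (hm : m ∈ D.first) (h : Reach (D.first ++ D.middle : List Polymer) m y) :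
    y ∈ D.first := by
  induction h with
  | refl => exact hm
  | @tail b c _ hbc ih =>
    obtain ⟨-, hc, hbc⟩ := hbc
    refine (List.mem_append.mp (Multiset.mem_coe.mp hc)).resolve_right fun hc => ?_
    have := D.right_le_edge ih
    have := (D.middle_between c hc).1
    have := hbc.2
    omega

theorem reach_of_mem_first (hm : m ∈ D.first) (hy : y ∈ D.first) :
    Reach (D.first ++ D.middle : List Polymer) m y := by
  refine (reach_of_isPreconnected ?_ (Multiset.mem_coe.mpr hm) (Multiset.mem_coe.mpr hy)).mono
    fun p hp => Multiset.mem_coe.mpr (List.mem_append_left _ (Multiset.mem_coe.mp hp))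
  exact isPreconnected_iff_ordConnected.mpr D.isConnected_first.2

theorem filter_reach_eq {M : Multiset Polymer} (hM : M = (D.first ++ D.middle : List Polymer))
    (hm : m ∈ D.first) :
    (D.first ++ D.middle).filter (fun x => Reach M m x) = D.first ∧
      (D.first ++ D.middle).filter (fun x => !Reach M m x) = D.middle := by
  subst hM
  have hfirst : ∀ y ∈ D.first, Reach (D.first ++ D.middle : List Polymer) m y :=
    fun y hy => D.reach_of_mem_first hm hy
  have hmiddle : ∀ y ∈ D.middle, ¬Reach (D.first ++ D.middle : List Polymer) m y :=
    fun y hy h => D.not_mem_first_of_mem_middle hy (D.mem_first_of_reach hm h)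
  simp only [List.filter_append]
  constructor
  · rw [List.filter_eq_self.mpr (by simpa using hfirst),
      List.filter_eq_nil_iff.mpr (by simpa using hmiddle), List.append_nil]
  · rw [List.filter_eq_nil_iff.mpr (by simpa using hfirst),
      List.filter_eq_self.mpr (by simpa using hmiddle), List.nil_append]

theorem mem_first_of_leftmost (hm : m ∈ D.first ++ D.middle)
    (hmin : ∀ p ∈ D.first ++ D.middle, m.left ≤ p.left) : m ∈ D.first := by
  refine (List.mem_append.mp hm).resolve_right fun hm' => ?_
  obtain ⟨x, w, hx⟩ := List.exists_cons_of_ne_nil D.first_ne_nil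
  have hx' : x ∈ D.first := hx ▸ List.mem_cons_self
  have := hmin x (List.mem_append_left _ hx')
  have := D.right_le_edge hx'
  have := (D.middle_between m hm').1
  have := x.left_lt_right
  omega

theorem mk_first_eq_of_mk_eq {D D' : NordicForm}
    (h : ⟦D.first ++ D.middle⟧ₕ = ⟦D'.first ++ D'.middle⟧ₕ) :
    ⟦D.first⟧ₕ = ⟦D'.first⟧ₕ ∧ ⟦D.middle⟧ₕ = ⟦D'.middle⟧ₕ := by
  have hM := congrArg toMultiset h
  rw [toMultiset_mk, toMultiset_mk] at hM
  obtain ⟨m, hm, hmin⟩ := Multiset.exists_min_image Polymer.left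
    (mt (Multiset.coe_eq_zero _).mp (List.append_ne_nil_of_left_ne_nil D.first_ne_nil _))
  have hm₁ := D.mem_first_of_leftmost hm fun p hp => hmin p (Multiset.mem_coe.mpr hp)
  have hm₂ := D'.mem_first_of_leftmost (Multiset.mem_coe.mp (hM ▸ hm))
    fun p hp => hmin p (hM ▸ Multiset.mem_coe.mpr hp)
  obtain ⟨h₁, h₂⟩ := D.filter_reach_eq rfl hm₁
  obtain ⟨h₁', h₂'⟩ := D'.filter_reach_eq hM hm₂
  exact ⟨(congrArg Heap.mk h₁).symm.trans ((mk_filter_congr _ h).trans (congrArg Heap.mk h₁')),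
    (congrArg Heap.mk h₂).symm.trans ((mk_filter_congr _ h).trans (congrArg Heap.mk h₂'))⟩

theorem quad_eq_of_mk_word_eq {D D' : NordicForm} (h : ⟦D.word⟧ₕ = ⟦D'.word⟧ₕ) :
    D.quad = D'.quad := by
  have hbase : D.base = D'.base :=
    D.isRightmostMinimal_base.unique (h ▸ D'.isRightmostMinimal_base)
  have hrest : ⟦D.first ++ D.middle ++ D.top⟧ₕ = ⟦D'.first ++ D'.middle ++ D'.top⟧ₕ := by
    apply mk_cons_cancel (x := D.base)
    rw [← D.mk_word, h, D'.mk_word, hbase]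
  obtain ⟨hfm, htop⟩ := mk_eq_mk_of_append_pyramid (fun x hx => D.not_concurrent_base hx)
    D.isPyramid (fun x hx => hbase ▸ D'.not_concurrent_base hx) (hbase ▸ D'.isPyramid) hrest
  obtain ⟨hfirst, hmiddle⟩ := mk_first_eq_of_mk_eq hfm
  have hedge : D.edge = D'.edge := D.isGreatest_edge.unique (hfirst ▸ D'.isGreatest_edge)
  simp only [quad, hfirst, hmiddle, hedge, ← hbase, mk_cons_congr D.base htop]

def shift (t : ℤ) : NordicForm where
  first := D.first.map (Polymer.shift t)
  middle := D.middle.map (Polymer.shift t)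
  base := D.base.shift t
  top := D.top.map (Polymer.shift t)
  edge := D.edge + t
  isConnected_first := D.isConnected_first.shift t
  isGreatest_edge := by
    rw [← shift_mk, rights_shift]
    exact add_left_mono.map_isGreatest D.isGreatest_edge
  middle_between := by
    simp only [List.mem_map, Polymer.left_shift]
    rintro _ ⟨x, hx, rfl⟩
    have := D.middle_between x hx
    constructor <;> simp only [Polymer.left_shift, Polymer.right_shift] <;> omega
  edge_lt := by simpa using D.edge_lt
  isPyramid := D.isPyramid.shift t
  reaches := by
    obtain ⟨p, hp, hpe⟩ := D.reaches
    exact ⟨p.shift t, List.mem_map_of_mem (f := Polymer.shift t) hp, by simpa using hpe⟩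

theorem word_shift (t : ℤ) : (D.shift t).word = D.word.map (Polymer.shift t) := by
  simp [word, shift]

theorem quad_shift (t : ℤ) : (D.shift t).quad = D.quad := by
  have hne := D.isConnected_first.1
  simp only [quad, shift, Prod.mk.injEq]
  refine ⟨normalize_shift hne, by rw [Polymer.left_shift]; congr 1; ring, ?_, ?_⟩
  · rw [← shift_mk, Heap.shift_shift]; congr 1; ring
  · rw [← List.map_cons, ← shift_mk, Heap.shift_shift]; congr 1; simp

end NordicForm

/-- The inverse of the Nordic decomposition: the right end `-1` of `C₁` is the paper's column
`[-2, -1]`. -/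
def compose (q : Heap × ℕ × Heap × Heap) : Heap :=
  (q.1.shift (-(q.1.maxRight + 1)) * (q.2.2.1 * q.2.2.2.shift q.2.1)).normalize

theorem totalLength_compose (q : Heap × ℕ × Heap × Heap) :
    (compose q).totalLength = q.1.totalLength + q.2.2.1.totalLength + q.2.2.2.totalLength := by
  rw [compose, Heap.normalize, totalLength_shift, totalLength_mul, totalLength_mul,
    totalLength_shift, totalLength_shift, add_assoc]

namespace NordicForm

variable (D : NordicForm)

theorem nordicQuad_quad : NordicQuad D.quad := by
  rw [NordicQuad]
  dsimp only [quad]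
  have hne := D.isConnected_first.1
  have hedge := D.edge_lt
  have hmin : (⟦D.base :: D.top⟧ₕ.shift (-D.base.left)).IsMinimal (D.base.shift (-D.base.left)) :=
    (isMinimal_iff.mpr ⟨_, rfl⟩).shift _
  refine ⟨D.isConnected_first.shift _, normalized_normalize hne, fun x hx => ?_,
    D.isPyramid.shift _, ⟨_, hmin, by simp⟩, ?_⟩
  · obtain ⟨y, hy, rfl⟩ := Multiset.mem_map.mp (toMultiset_shift ▸ hx)
    have := D.middle_between y (mem_toMultiset_mk.mp hy)
    simp only [Polymer.left_shift, Polymer.right_shift]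
    omega
  · have hP : (⟦D.base :: D.top⟧ₕ).toMultiset ≠ 0 :=
      mt toMultiset_mk_eq_zero.mp (List.cons_ne_nil _ _)
    have hμ := isLeast_minLeft hP
    obtain ⟨p, hp, hpe⟩ := D.reaches
    have hμp := hμ.2 ⟨p, mem_toMultiset_mk.mpr hp, rfl⟩
    have hμb := hμ.2 ⟨D.base, mem_toMultiset_mk.mpr (.head _), rfl⟩
    refine ⟨(D.base.left - (⟦D.base :: D.top⟧ₕ).minLeft).toNat, ⟨_, hmin, isLeast_lefts_iff.mp ?_⟩,
      by omega⟩
    have hw : (D.base.shift (-D.base.left)).left -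
        (D.base.left - (⟦D.base :: D.top⟧ₕ).minLeft).toNat =
          (⟦D.base :: D.top⟧ₕ).minLeft + -D.base.left := by
      simp only [Polymer.left_shift]
      omega
    rw [lefts_shift, hw]
    exact add_left_mono.map_isLeast hμ

theorem compose_quad : compose D.quad = (⟦D.word⟧ₕ).normalize := by
  have hne := D.isConnected_first.1
  have hmax : (⟦D.first⟧ₕ).maxRight = D.edge := (isGreatest_maxRight hne).unique D.isGreatest_edge
  have hk : ((D.base.left - (D.edge + 1)).toNat : ℤ) = D.base.left - (D.edge + 1) := by
    have := D.edge_lt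
    omega
  have hword : ⟦D.word⟧ₕ = ⟦D.first⟧ₕ * (⟦D.middle⟧ₕ * ⟦D.base :: D.top⟧ₕ) := by
    rw [word, List.append_assoc, mk_append, mk_append]
  rw [hword, ← normalize_shift (t := -(D.edge + 1)) (by simp [toMultiset_mul, toMultiset_mk]),
    shift_mul, shift_mul]
  simp only [compose, quad]
  congr 2
  · rw [Heap.normalize, maxRight_shift hne, hmax, Heap.shift_shift]
    congr 1
    ring
  · rw [Heap.shift_shift, hk]
    congr 2
    ring

theorem exists_quad_eq {q : Heap × ℕ × Heap × Heap} (hq : NordicQuad q) :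
    ∃ D : NordicForm, D.quad = q := by
  obtain ⟨C₁, k, H, P⟩ := q
  dsimp only [NordicQuad] at hq
  obtain ⟨hC₁, hC₁n, hH, hP, ⟨a, ha, ha0⟩, w, ⟨a', ha', hw, p, hp, hpw⟩, hkw⟩ := hq
  obtain rfl : a = a' := hP.unique ha ha'
  obtain ⟨L₁, rfl⟩ := C₁.exists_eq_mk
  obtain ⟨LH, rfl⟩ := H.exists_eq_mk
  obtain ⟨T, rfl⟩ := isMinimal_iff.mp ha
  have hedge : (-1 : ℤ) = (⟦L₁⟧ₕ).maxRight + -((⟦L₁⟧ₕ).maxRight + 1) := by ring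
  refine ⟨{
    first := L₁.map (Polymer.shift (-((⟦L₁⟧ₕ).maxRight + 1)))
    middle := LH
    base := a.shift k
    top := T.map (Polymer.shift k)
    edge := -1
    isConnected_first := hC₁.shift _
    isGreatest_edge := by
      rw [← shift_mk, rights_shift, hedge]
      exact add_left_mono.map_isGreatest (isGreatest_maxRight hC₁.1)
    middle_between := fun x hx => by
      have := hH x (mem_toMultiset_mk.mpr hx)
      simp only [Polymer.left_shift, ha0]
      omega
    edge_lt := by simp only [Polymer.left_shift, ha0]; omega
    isPyramid := hP.shift k
    reaches := ⟨p.shift k, ?_, by simp only [Polymer.left_shift]; omega⟩ }, ?_⟩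
  · exact List.mem_map_of_mem (f := Polymer.shift k) (l := a :: T) (mem_toMultiset_mk.mp hp)
  · simp only [NordicForm.quad, Prod.mk.injEq, Polymer.left_shift, ha0, zero_add]
    refine ⟨?_, by simp, by simp, ?_⟩
    · rw [← shift_mk, normalize_shift hC₁.1, hC₁n.normalize_eq]
    · rw [← List.map_cons, ← shift_mk, Heap.shift_shift, add_neg_cancel, Heap.shift_zero]

theorem exists_word_eq {C : Heap} (hC : C.IsConnected) (hnp : ¬C.IsPyramid) :
    ∃ D : NordicForm, C = ⟦D.word⟧ₕ := by
  obtain ⟨α, hα⟩ := exists_isRightmostMinimal hC.1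
  obtain ⟨T, rfl⟩ := isMinimal_iff.mp hα.1
  obtain ⟨R, P, hRP, hRα, hP⟩ := exists_mk_cons_eq_append_pyramid α T
  rw [hRP] at hC hnp hα ⊢
  have hR : R ≠ [] := by
    rintro rfl
    exact hnp hP
  have hleft : ∀ x ∈ R, x.right < α.left := fun x hx =>
    right_lt_left_of_isRightmostMinimal hα hRα hx
  obtain ⟨K, M, e, hKM, hK, he, hM⟩ := exists_mk_eq_component_append hR
  have hmem : ∀ x ∈ K ++ M, x ∈ R := fun x hx => mem_of_mk_eq hKM.symm hx
  have hword : ⟦R ++ α :: P⟧ₕ = ⟦K ++ M ++ α :: P⟧ₕ := by rw [mk_append, hKM, ← mk_append]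
  obtain ⟨x₀, hx₀, hx₀e⟩ := he.1
  have hx₀K : x₀ ∈ K := mem_toMultiset_mk.mp hx₀
  have hedge : e < α.left := hx₀e ▸ hleft x₀ (hmem x₀ (List.mem_append_left _ hx₀K))
  obtain ⟨p, hp, hpe, hep⟩ := exists_mem_left_le_lt_right (hword ▸ hC.2) hedge
    (mem_space_mk.mpr ⟨x₀, by simp [hx₀K], hx₀e ▸ x₀.right_mem_interval⟩)
    (mem_space_mk.mpr ⟨α, by simp, α.left_mem_interval⟩)
  have hpP : p ∈ α :: P := by
    rcases List.mem_append.mp hp with hp | hp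
    · rcases List.mem_append.mp hp with hp | hp
      · exact absurd (he.2 ⟨p, mem_toMultiset_mk.mpr hp, rfl⟩) hep.not_ge
      · exact absurd (hM p hp) hpe.not_gt
    · exact hp
  exact ⟨⟨K, M, α, P, e, hK, he,
    fun y hy => ⟨hM y hy, hleft y (hmem y (List.mem_append_right _ hy))⟩, hedge, hP,
    ⟨p, hpP, hpe⟩⟩, hword⟩

end NordicForm

theorem mapsTo_compose : Set.MapsTo compose {q | NordicQuad q}
    {C | C.IsConnected ∧ ¬C.IsPyramid ∧ C.Normalized} := by
  intro q hq
  obtain ⟨D, rfl⟩ := NordicForm.exists_quad_eq hq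
  rw [Set.mem_ofPred_eq, D.compose_quad]
  exact ⟨D.isConnected_word.shift _, fun h => D.not_isPyramid (isPyramid_shift_iff.mp h),
    normalized_normalize D.isConnected_word.1⟩

theorem injOn_compose : Set.InjOn compose {q | NordicQuad q} := by
  intro q hq q' hq' h
  obtain ⟨D, rfl⟩ := NordicForm.exists_quad_eq hq
  obtain ⟨D', rfl⟩ := NordicForm.exists_quad_eq hq'
  rw [D.compose_quad, D'.compose_quad] at h
  rw [← D'.quad_shift (-(⟦D'.word⟧ₕ).minLeft + (⟦D.word⟧ₕ).minLeft)]
  exact NordicForm.quad_eq_of_mk_word_eq (by rw [NordicForm.word_shift, ← shift_mk,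
    ← Heap.eq_shift_of_normalize_eq h])

theorem surjOn_compose : Set.SurjOn compose {q | NordicQuad q}
    {C | C.IsConnected ∧ ¬C.IsPyramid ∧ C.Normalized} := by
  rintro C ⟨hC, hnp, hn⟩
  obtain ⟨D, rfl⟩ := NordicForm.exists_word_eq hC hnp
  exact ⟨D.quad, D.nordicQuad_quad, D.compose_quad.trans hn.normalize_eq⟩

end

theorem nordic_decomposition :
    ∃ e : {C : Heap // C.IsConnected ∧ ¬C.IsPyramid ∧ C.Normalized} ≃
          {q : Heap × ℕ × Heap × Heap // NordicQuad q},
      ∀ C, C.1.totalLength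
        = (e C).1.1.totalLength + (e C).1.2.2.1.totalLength
          + (e C).1.2.2.2.totalLength := by
  have h : Set.BijOn compose {q | NordicQuad q}
      {C | C.IsConnected ∧ ¬C.IsPyramid ∧ C.Normalized} :=
    ⟨mapsTo_compose, injOn_compose, surjOn_compose⟩
  refine ⟨(h.equiv compose).symm, fun C => ?_⟩
  conv_lhs => rw [← (h.equiv compose).apply_symm_apply C]
  exact totalLength_compose _
end
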